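/- arXiv:1611.07798 — 11 statements merged into one kernel-verified Lean document; each statement's English description precedes it below -/
import Mathlib

section
/- For all integers m, n, p, we have 4·|m·n·(m+p)·(n+p)| ≤ (m² + n² + p² + m·p + n·p)². -/
theorem stmt0 (m n p : ℤ) :
    4 * |m * n * (m + p) * (n + p)| ≤ (m^2 + n^2 + p^2 + m*p + n*p)^2 := by
  rcases abs_cases (m * n * (m + p) * (n + p)) with ⟨h, _⟩ | ⟨h, _⟩ <;> rw [h] <;>
    nlinarith [sq_nonneg ((2*m+p)^2 - (2*n+p)^2), sq_nonneg ((2*m+p)*(2*n+p)),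
      mul_nonneg (sq_nonneg p) (sq_nonneg (2*m+p)),
      mul_nonneg (sq_nonneg p) (sq_nonneg (2*n+p)),
      mul_nonneg (sq_nonneg (2*m+p)) (sq_nonneg (2*n+p)), sq_nonneg p, sq_nonneg (p*p)]
end

section
/- For every β > 0, the sum over all (m,n,p) ∈ ℤ³ of (4n² + 4np − p²)·exp(−β·(m² + n² + p² + mp + np)) equals 0. -/
/-!
The form `R` is the Gram form of the face-centred cubic lattice `A₃`. Its automorphism group has
order 48, and the orbit of the weight `4n² + 4np − p²` under it consists of six quadratic forms
whose sum is zero. Each automorph permutes `ℤ³` and fixes `R`, so reindexing the absolutely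
convergent sum along six automorphs realising this orbit shows that six times the sum vanishes.
-/

open Real

theorem tsum_eq_zero_of_sum_comp_perm_eq_zero {α ι E : Type*} [Fintype ι] [Nonempty ι]
    [AddCommMonoid E] [TopologicalSpace E] [ContinuousAdd E] [T2Space E] [IsAddTorsionFree E]
    {f : α → E} (hf : Summable f) (σ : ι → Equiv.Perm α) (h : ∀ a, ∑ i, f (σ i a) = 0) :
    ∑' a, f a = 0 := by
  have : Fintype.card ι • ∑' a, f a = 0 :=
    calc Fintype.card ι • ∑' a, f a = ∑ i, ∑' a, f (σ i a) := by simp [Equiv.tsum_eq]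
    _ = ∑' a, ∑ i, f (σ i a) :=
      (Summable.tsum_finsetSum fun i _ => (σ i).summable_iff.mpr hf).symm
    _ = 0 := by simp [h]
  exact (nsmul_eq_zero_iff_right Fintype.card_ne_zero).mp this

theorem summable_one_add_sq_mul_exp_neg_mul_sq {c : ℝ} (hc : 0 < c) :
    Summable fun x : ℤ => (1 + (x : ℝ) ^ 2) * exp (-c * x ^ 2) := by
  have h k := summable_pow_mul_jacobiTheta₂_term_bound 0 (div_pos hc pi_pos) k
  convert (h 0).add (h 2) using 2 with x
  have : π * (c / π * (x : ℝ) ^ 2) = c * x ^ 2 := by field_simp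
  simp [this, add_mul]

def quadForm (v : ℤ × ℤ × ℤ) : ℤ :=
  v.1 ^ 2 + v.2.1 ^ 2 + v.2.2 ^ 2 + v.1 * v.2.2 + v.2.1 * v.2.2

def weight (v : ℤ × ℤ × ℤ) : ℤ :=
  4 * v.2.1 ^ 2 + 4 * v.2.1 * v.2.2 - v.2.2 ^ 2

def automorph : Fin 6 → Equiv.Perm (ℤ × ℤ × ℤ)
  | 0 => Equiv.refl _
  | 1 => ⟨fun v => (-v.1 - v.2.2, -v.1, v.1 - v.2.1),
      fun v => (-v.2.1, -v.2.1 - v.2.2, -v.1 + v.2.1),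
      fun _ => by ext <;> grind, fun _ => by ext <;> grind⟩
  | 2 => ⟨fun v => (-v.1 - v.2.2, -v.1, v.1 + v.2.1 + v.2.2),
      fun v => (-v.2.1, v.1 + v.2.2, -v.1 + v.2.1),
      fun _ => by ext <;> grind, fun _ => by ext <;> grind⟩
  | 3 => ⟨fun v => (-v.1, -v.1 - v.2.2, v.1 - v.2.1),
      fun v => (-v.1, -v.1 - v.2.2, v.1 - v.2.1),
      fun _ => by ext <;> grind, fun _ => by ext <;> grind⟩
  | 4 => ⟨fun v => (-v.1, -v.1 - v.2.2, v.1 + v.2.1 + v.2.2),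
      fun v => (-v.1, v.2.1 + v.2.2, v.1 - v.2.1),
      fun _ => by ext <;> grind, fun _ => by ext <;> grind⟩
  | 5 => ⟨fun v => (-v.2.1 - v.2.2, -v.1 - v.2.2, v.2.2),
      fun v => (-v.2.1 - v.2.2, -v.1 - v.2.2, v.2.2),
      fun _ => by ext <;> grind, fun _ => by ext <;> grind⟩

theorem quadForm_automorph (i : Fin 6) (v : ℤ × ℤ × ℤ) :
    quadForm (automorph i v) = quadForm v := by
  fin_cases i <;> simp [automorph, quadForm] <;> ring

theorem sum_weight_automorph (v : ℤ × ℤ × ℤ) : ∑ i, weight (automorph i v) = 0 := by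
  simp [Fin.sum_univ_succ, automorph, weight]; ring

theorem sq_add_sq_add_sq_le_four_mul_quadForm (v : ℤ × ℤ × ℤ) :
    v.1 ^ 2 + v.2.1 ^ 2 + v.2.2 ^ 2 ≤ 4 * quadForm v := by
  obtain ⟨m, n, p⟩ := v
  simp only [quadForm]
  nlinarith [sq_nonneg (3 * m + 2 * p), sq_nonneg (3 * n + 2 * p), sq_nonneg p]

theorem abs_weight_le (v : ℤ × ℤ × ℤ) :
    |weight v| ≤ 6 * ((1 + v.1 ^ 2) * ((1 + v.2.1 ^ 2) * (1 + v.2.2 ^ 2))) := by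
  obtain ⟨m, n, p⟩ := v
  calc |weight (m, n, p)| ≤ 6 * n ^ 2 + 3 * p ^ 2 := by
        rw [weight, abs_le]; constructor <;> nlinarith [sq_nonneg (n + p), sq_nonneg (n - p)]
    _ ≤ 6 * ((1 + n ^ 2) * (1 + p ^ 2)) := by nlinarith [sq_nonneg (n * p)]
    _ ≤ 6 * ((1 + m ^ 2) * ((1 + n ^ 2) * (1 + p ^ 2))) := by
        nlinarith [sq_nonneg m, mul_nonneg (sq_nonneg n) (sq_nonneg p)]

theorem summable_weight_mul_exp_neg_mul_quadForm {β : ℝ} (hβ : 0 < β) :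
    Summable fun v : ℤ × ℤ × ℤ => (weight v : ℝ) * exp (-β * quadForm v) := by
  set g : ℤ → ℝ := fun x => (1 + (x : ℝ) ^ 2) * exp (-(β / 4) * x ^ 2)
  have hg : Summable g := summable_one_add_sq_mul_exp_neg_mul_sq (by positivity)
  have hg0 : 0 ≤ g := fun x => by positivity
  refine .of_norm_bounded
    (((hg.mul_of_nonneg (hg.mul_of_nonneg hg hg0 hg0) hg0 fun _ => by positivity)).mul_left 6)
    fun ⟨m, n, p⟩ => ?_
  have hexp : exp (-β * quadForm (m, n, p)) ≤
      exp (-(β / 4) * m ^ 2) * (exp (-(β / 4) * n ^ 2) * exp (-(β / 4) * p ^ 2)) := by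
    rw [← exp_add, ← exp_add, exp_le_exp]
    have h4 : (m : ℝ) ^ 2 + n ^ 2 + p ^ 2 ≤ 4 * quadForm (m, n, p) := by
      exact_mod_cast sq_add_sq_add_sq_le_four_mul_quadForm (m, n, p)
    nlinarith
  have hw : |(weight (m, n, p) : ℝ)| ≤ 6 * ((1 + m ^ 2) * ((1 + n ^ 2) * (1 + p ^ 2))) := by
    exact_mod_cast abs_weight_le (m, n, p)
  calc ‖(weight (m, n, p) : ℝ) * exp (-β * quadForm (m, n, p))‖
      = |(weight (m, n, p) : ℝ)| * exp (-β * quadForm (m, n, p)) := by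
        rw [norm_mul, norm_eq_abs, norm_of_nonneg (exp_pos _).le]
    _ ≤ 6 * ((1 + m ^ 2) * ((1 + n ^ 2) * (1 + p ^ 2))) *
        (exp (-(β / 4) * m ^ 2) * (exp (-(β / 4) * n ^ 2) * exp (-(β / 4) * p ^ 2))) := by
        gcongr
    _ = 6 * (g m * (g n * g p)) := by ring

theorem stmt3 (β : ℝ) (hβ : 0 < β) :
    ∑' v : ℤ × ℤ × ℤ,
      ((4 * (v.2.1:ℝ)^2 + 4 * v.2.1 * v.2.2 - (v.2.2:ℝ)^2) *
        Real.exp (-β * ((v.1:ℝ)^2 + (v.2.1:ℝ)^2 + (v.2.2:ℝ)^2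
          + v.1 * v.2.2 + v.2.1 * v.2.2))) = 0 := by
  have h := tsum_eq_zero_of_sum_comp_perm_eq_zero
    (summable_weight_mul_exp_neg_mul_quadForm hβ) automorph fun v => by
      simp_rw [quadForm_automorph, ← Finset.sum_mul, ← Int.cast_sum, sum_weight_automorph,
        Int.cast_zero, zero_mul]
  convert h using 3 with v
  push_cast [weight, quadForm]
  ring
end

section
/- For every β > 0, the sum over all (m,n,p) ∈ ℤ³ of p·(2m + p)·exp(−β·(m² + n² + p² + mp + np)) equals 0. -/
def fccInv : ℤ × ℤ × ℤ ≃ ℤ × ℤ × ℤ where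
  toFun v := (v.1 + v.2.2, v.2.1 + v.2.2, -v.2.2)
  invFun v := (v.1 + v.2.2, v.2.1 + v.2.2, -v.2.2)
  left_inv v := by simp
  right_inv v := by simp

theorem stmt5 (β : ℝ) (hβ : 0 < β) :
    ∑' v : ℤ × ℤ × ℤ,
      ((v.2.2:ℝ) * (2 * (v.1:ℝ) + v.2.2) *
        Real.exp (-β * ((v.1:ℝ)^2 + (v.2.1:ℝ)^2 + (v.2.2:ℝ)^2
          + v.1 * v.2.2 + v.2.1 * v.2.2))) = 0 := by
  set f : ℤ × ℤ × ℤ → ℝ := fun v =>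
      ((v.2.2:ℝ) * (2 * (v.1:ℝ) + v.2.2) *
        Real.exp (-β * ((v.1:ℝ)^2 + (v.2.1:ℝ)^2 + (v.2.2:ℝ)^2
          + v.1 * v.2.2 + v.2.1 * v.2.2))) with hf
  have key : ∀ v, f (fccInv v) = - f v := by
    rintro ⟨m, n, p⟩
    simp only [hf, fccInv, Equiv.coe_fn_mk]
    push_cast
    rw [show -β * (((m:ℝ) + p)^2 + ((n:ℝ) + p)^2 + (-(p:ℝ))^2
        + ((m:ℝ) + p) * (-(p:ℝ)) + ((n:ℝ) + p) * (-(p:ℝ)))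
      = -β * ((m:ℝ)^2 + (n:ℝ)^2 + (p:ℝ)^2 + (m:ℝ) * p + (n:ℝ) * p) from by ring]
    ring
  have h1 : ∑' v, f v = ∑' v, f (fccInv v) := (fccInv.tsum_eq f).symm
  have h2 : ∑' v, f (fccInv v) = - ∑' v, f v := by
    simp_rw [key]; exact tsum_neg
  linarith [h1, h2]
end

section
/- For every β > 0, the sum over all (m,n,p) ∈ ℤ³ of p²·exp(−β·R(m,n,p)) equals (2/3) times the sum over all (m,n,p) ∈ ℤ³ of R(m,n,p)·exp(−β·R(m,n,p)), where R(m,n,p) = m² + n² + p² + mp + np. -/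
/-!
Write `R` for the form and `ℓ₁ = p`, `ℓ₂ = n - m`, `ℓ₃ = m + n + p`, so that
`2 R = ℓ₁² + ℓ₂² + ℓ₃²` (the cube axes of the FCC lattice). The unimodular map
`(m, n, p) ↦ (-n, m + p, n - m)` permutes the `ℓᵢ` cyclically and hence preserves `R`;
reindexing the lattice sum along it shows that the three sums `∑ ℓᵢ² e^{-βR}` coincide,
so each of them is a third of `∑ 2 R e^{-βR}`.
-/

open Real

def fccForm (v : ℤ × ℤ × ℤ) : ℝ :=
  (v.1:ℝ)^2 + (v.2.1:ℝ)^2 + (v.2.2:ℝ)^2 + v.1 * v.2.2 + v.2.1 * v.2.2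

def fccRotation : ℤ × ℤ × ℤ ≃ ℤ × ℤ × ℤ where
  toFun v := (-v.2.1, v.1 + v.2.2, v.2.1 - v.1)
  invFun v := (-v.1 - v.2.2, -v.1, v.1 + v.2.1 + v.2.2)
  left_inv v := by simp only [Prod.ext_iff]; omega
  right_inv v := by simp only [Prod.ext_iff]; omega

lemma two_mul_fccForm (v : ℤ × ℤ × ℤ) :
    2 * fccForm v = (v.2.2:ℝ)^2 + ((fccRotation v).2.2:ℝ)^2
      + ((fccRotation (fccRotation v)).2.2:ℝ)^2 := by
  simp only [fccForm, fccRotation, Equiv.coe_fn_mk]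
  push_cast
  ring

lemma fccForm_fccRotation (v : ℤ × ℤ × ℤ) : fccForm (fccRotation v) = fccForm v := by
  simp only [fccForm, fccRotation, Equiv.coe_fn_mk]
  push_cast
  ring

lemma fccForm_nonneg (v : ℤ × ℤ × ℤ) : 0 ≤ fccForm v := by
  have := two_mul_fccForm v
  nlinarith [sq_nonneg ((fccRotation v).2.2:ℝ), sq_nonneg ((fccRotation (fccRotation v)).2.2:ℝ)]

lemma sum_sq_le_four_mul_fccForm (v : ℤ × ℤ × ℤ) :
    (v.1:ℝ)^2 + (v.2.1:ℝ)^2 + (v.2.2:ℝ)^2 ≤ 4 * fccForm v := by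
  unfold fccForm
  nlinarith [sq_nonneg (3 * (v.1:ℝ) + 2 * v.2.2), sq_nonneg (3 * (v.2.1:ℝ) + 2 * v.2.2)]

lemma summable_exp_neg_mul_int_sq {c : ℝ} (hc : 0 < c) :
    Summable fun n : ℤ => exp (-c * n^2) := by
  have := summable_pow_mul_jacobiTheta₂_term_bound 0 (div_pos hc pi_pos) 0
  convert this using 2 with n
  field_simp
  ring_nf

lemma summable_exp_neg_mul_fccForm {c : ℝ} (hc : 0 < c) :
    Summable fun v => exp (-c * fccForm v) := by
  have hg := summable_exp_neg_mul_int_sq (by positivity : 0 < c / 4)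
  have hG := hg.mul_of_nonneg (hg.mul_of_nonneg hg (fun _ => (exp_pos _).le)
    (fun _ => (exp_pos _).le)) (fun _ => (exp_pos _).le) (fun _ => by positivity)
  refine hG.of_nonneg_of_le (fun _ => (exp_pos _).le) fun v => ?_
  rw [← exp_add, ← exp_add, exp_le_exp]
  nlinarith [sum_sq_le_four_mul_fccForm v]

lemma mul_exp_neg_mul_le {β : ℝ} (hβ : 0 < β) (x : ℝ) :
    x * exp (-β * x) ≤ 2 / β * exp (-(β / 2) * x) := by
  have hsq : exp (-β * x) = exp (-(β / 2) * x) * exp (-(β / 2) * x) := by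
    rw [← exp_add]; ring_nf
  have hcancel : exp (β / 2 * x) * exp (-(β / 2) * x) = 1 := by
    rw [← exp_add, neg_mul, add_neg_cancel, exp_zero]
  calc x * exp (-β * x) = 2 / β * (β / 2 * x) * exp (-(β / 2) * x) * exp (-(β / 2) * x) := by
        rw [hsq]; field_simp
    _ ≤ 2 / β * exp (β / 2 * x) * exp (-(β / 2) * x) * exp (-(β / 2) * x) := by
        gcongr; linarith [add_one_le_exp (β / 2 * x)]
    _ = 2 / β * exp (-(β / 2) * x) := by rw [mul_assoc (2 / β), hcancel, mul_one]

lemma summable_fccForm_mul_exp_neg_mul_fccForm {β : ℝ} (hβ : 0 < β) :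
    Summable fun v => fccForm v * exp (-β * fccForm v) :=
  ((summable_exp_neg_mul_fccForm (half_pos hβ)).mul_left (2 / β)).of_nonneg_of_le
    (fun v => mul_nonneg (fccForm_nonneg v) (exp_pos _).le)
    (fun _ => mul_exp_neg_mul_le hβ _)

theorem tsum_sq_mul_exp_neg_mul_fccForm {β : ℝ} (hβ : 0 < β) :
    ∑' v : ℤ × ℤ × ℤ, (v.2.2:ℝ)^2 * exp (-β * fccForm v)
      = 2 / 3 * ∑' v, fccForm v * exp (-β * fccForm v) := by
  let f : ℤ × ℤ × ℤ → ℝ := fun v => (v.2.2:ℝ)^2 * exp (-β * fccForm v)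
  have hf : Summable f := by
    refine ((summable_fccForm_mul_exp_neg_mul_fccForm hβ).mul_left 2).of_nonneg_of_le
      (fun v => by positivity) fun v => ?_
    rw [← mul_assoc]
    refine mul_le_mul_of_nonneg_right ?_ (exp_pos _).le
    nlinarith [two_mul_fccForm v, sq_nonneg ((fccRotation v).2.2:ℝ),
      sq_nonneg ((fccRotation (fccRotation v)).2.2:ℝ)]
  have hf₁ : Summable fun v => f (fccRotation v) := fccRotation.summable_iff.mpr hf
  have hf₂ : Summable fun v => f (fccRotation (fccRotation v)) := fccRotation.summable_iff.mpr hf₁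
  have hsplit : ∀ v, 2 * (fccForm v * exp (-β * fccForm v))
      = f v + (f (fccRotation v) + f (fccRotation (fccRotation v))) := fun v => by
    simp only [f, fccForm_fccRotation]
    rw [← mul_assoc, two_mul_fccForm]
    ring
  have hreindex : 2 * ∑' v, fccForm v * exp (-β * fccForm v) = 3 * ∑' v, f v := by
    rw [← tsum_mul_left, tsum_congr hsplit, hf.tsum_add (hf₁.add hf₂), hf₁.tsum_add hf₂,
      fccRotation.tsum_eq fun v => f (fccRotation v), fccRotation.tsum_eq f]
    ring
  linarith

theorem stmt7 (β : ℝ) (hβ : 0 < β) :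
    ∑' v : ℤ × ℤ × ℤ,
      ((v.2.2:ℝ)^2 *
        Real.exp (-β * ((v.1:ℝ)^2 + (v.2.1:ℝ)^2 + (v.2.2:ℝ)^2
          + v.1 * v.2.2 + v.2.1 * v.2.2)))
    = (2/3) * ∑' v : ℤ × ℤ × ℤ,
      (((v.1:ℝ)^2 + (v.2.1:ℝ)^2 + (v.2.2:ℝ)^2 + v.1 * v.2.2 + v.2.1 * v.2.2) *
        Real.exp (-β * ((v.1:ℝ)^2 + (v.2.1:ℝ)^2 + (v.2.2:ℝ)^2
          + v.1 * v.2.2 + v.2.1 * v.2.2))) :=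
  tsum_sq_mul_exp_neg_mul_fccForm hβ
end

section
/- For every β > 0, the sum over all (m,n,p) ∈ ℤ³ of n·p·exp(−β·R(m,n,p)) equals −(1/3) times the sum over all (m,n,p) ∈ ℤ³ of R(m,n,p)·exp(−β·R(m,n,p)), where R(m,n,p) = m² + n² + p² + mp + np. -/
open Real

noncomputable def Rf (v : ℤ × ℤ × ℤ) : ℝ :=
  (v.1:ℝ)^2 + (v.2.1:ℝ)^2 + (v.2.2:ℝ)^2 + v.1 * v.2.2 + v.2.1 * v.2.2

noncomputable def Nf (v : ℤ × ℤ × ℤ) : ℝ :=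
  (v.1:ℝ)^2 + (v.2.1:ℝ)^2 + (v.2.2:ℝ)^2

lemma gauss_int {c : ℝ} (hc : 0 < c) :
    Summable fun n : ℤ => Real.exp (-c * (n : ℝ) ^ 2) := by
  have hnat : Summable fun n : ℕ => Real.exp (-c * (n : ℝ) ^ 2) := by
    have hbase : Summable fun n : ℕ => Real.exp (-c * (n : ℝ)) := by
      simpa using summable_pow_mul_exp_neg_nat_mul 0 hc
    refine Summable.of_nonneg_of_le (fun n => (Real.exp_pos _).le) (fun n => ?_) hbase
    apply Real.exp_le_exp.mpr
    have h : (n:ℝ) ≤ (n:ℝ)^2 := by exact_mod_cast Nat.le_self_pow two_ne_zero n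
    have := mul_le_mul_of_nonneg_left h hc.le
    linarith
  apply Summable.of_nat_of_neg <;> simpa using hnat

lemma gauss3 {c : ℝ} (hc : 0 < c) :
    Summable fun v : ℤ × ℤ × ℤ => Real.exp (-c * Nf v) := by
  have h1 := gauss_int hc
  have h2 := h1.mul_of_nonneg h1 (fun _ => (Real.exp_pos _).le) (fun _ => (Real.exp_pos _).le)
  have h3 := h1.mul_of_nonneg h2 (fun _ => (Real.exp_pos _).le)
    (fun x => mul_nonneg (Real.exp_pos _).le (Real.exp_pos _).le)
  refine h3.congr fun v => ?_
  simp only [Nf, ← Real.exp_add]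
  ring_nf

lemma key_summable {β : ℝ} (hβ : 0 < β) (Q : ℤ × ℤ × ℤ → ℝ)
    (hQ : ∀ v, |Q v| ≤ 3 * Nf v) :
    Summable fun v => Q v * Real.exp (-β * Rf v) := by
  apply Summable.of_norm
  have hsum := (gauss3 (show (0:ℝ) < β/8 by positivity)).mul_left (24/β)
  refine Summable.of_nonneg_of_le (fun v => norm_nonneg _) (fun v => ?_) hsum
  obtain ⟨m, n, p⟩ := v
  have hN : 0 ≤ Nf (m,n,p) := by simp only [Nf]; positivity
  have hR : Nf (m,n,p) / 4 ≤ Rf (m,n,p) := by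
    simp only [Nf, Rf]
    nlinarith [sq_nonneg ((m:ℝ)+p), sq_nonneg ((n:ℝ)+p), sq_nonneg ((m:ℝ)-n)]
  have h1 : ‖Q (m,n,p) * Real.exp (-β * Rf (m,n,p))‖
      ≤ 3 * Nf (m,n,p) * Real.exp (-(β/4) * Nf (m,n,p)) := by
    rw [norm_mul, Real.norm_eq_abs, Real.norm_eq_abs, Real.abs_exp]
    have := hQ (m,n,p)
    have hexp : Real.exp (-β * Rf (m,n,p)) ≤ Real.exp (-(β/4) * Nf (m,n,p)) := by
      apply Real.exp_le_exp.mpr; nlinarith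
    exact mul_le_mul this hexp (Real.exp_pos _).le (by linarith [abs_nonneg (Q (m,n,p))])
  refine h1.trans ?_
  set N := Nf (m,n,p)
  have hsplit : Real.exp (-(β/4) * N) = Real.exp (-(β/8) * N) * Real.exp (-(β/8) * N) := by
    rw [← Real.exp_add]; ring_nf
  rw [hsplit, ← mul_assoc]
  have hkey : 3 * N * Real.exp (-(β/8) * N) ≤ 24/β := by
    have h2 : (β/8) * N ≤ Real.exp ((β/8) * N) := by
      linarith [Real.add_one_le_exp ((β/8) * N)]
    have h3 : (β/8) * N * Real.exp (-(β/8) * N) ≤ 1 := by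
      rw [show -(β/8) * N = -((β/8)*N) by ring, Real.exp_neg,
        mul_inv_le_iff₀ (Real.exp_pos _), one_mul]; exact h2
    have h8 : (0:ℝ) < β/8 := by positivity
    calc 3 * N * Real.exp (-(β/8) * N)
        = (24/β) * ((β/8) * N * Real.exp (-(β/8) * N)) := by field_simp; ring
      _ ≤ (24/β) * 1 := by
          apply mul_le_mul_of_nonneg_left h3 (by positivity)
      _ = 24/β := mul_one _
  exact mul_le_mul_of_nonneg_right hkey (Real.exp_pos _).le

def g1 : ℤ × ℤ × ℤ ≃ ℤ × ℤ × ℤ where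
  toFun v := (-v.1 - v.2.2, -v.1, v.1 - v.2.1)
  invFun v := (-v.2.1, -v.2.1 - v.2.2, v.2.1 - v.1)
  left_inv v := by obtain ⟨m, n, p⟩ := v; simp only [Prod.mk.injEq]; omega
  right_inv v := by obtain ⟨m, n, p⟩ := v; simp only [Prod.mk.injEq]; omega

def g2 : ℤ × ℤ × ℤ ≃ ℤ × ℤ × ℤ where
  toFun v := (-v.1 - v.2.2, -v.2.1 - v.2.2, v.1 + v.2.1 + v.2.2)
  invFun v := (v.2.1 + v.2.2, v.1 + v.2.2, -v.1 - v.2.1 - v.2.2)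
  left_inv v := by obtain ⟨m, n, p⟩ := v; simp only [Prod.mk.injEq]; omega
  right_inv v := by obtain ⟨m, n, p⟩ := v; simp only [Prod.mk.injEq]; omega

lemma Rf_g1 (v : ℤ × ℤ × ℤ) : Rf (g1 v) = Rf v := by
  obtain ⟨m, n, p⟩ := v; simp only [Rf, g1, Equiv.coe_fn_mk]; push_cast; ring

lemma Rf_g2 (v : ℤ × ℤ × ℤ) : Rf (g2 v) = Rf v := by
  obtain ⟨m, n, p⟩ := v; simp only [Rf, g2, Equiv.coe_fn_mk]; push_cast; ring

theorem stmt9 (β : ℝ) (hβ : 0 < β) :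
    ∑' v : ℤ × ℤ × ℤ,
      ((v.2.1:ℝ) * (v.2.2:ℝ) *
        Real.exp (-β * ((v.1:ℝ)^2 + (v.2.1:ℝ)^2 + (v.2.2:ℝ)^2
          + v.1 * v.2.2 + v.2.1 * v.2.2)))
    = (-(1/3)) * ∑' v : ℤ × ℤ × ℤ,
      (((v.1:ℝ)^2 + (v.2.1:ℝ)^2 + (v.2.2:ℝ)^2 + v.1 * v.2.2 + v.2.1 * v.2.2) *
        Real.exp (-β * ((v.1:ℝ)^2 + (v.2.1:ℝ)^2 + (v.2.2:ℝ)^2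
          + v.1 * v.2.2 + v.2.1 * v.2.2))) := by
  set f : ℤ × ℤ × ℤ → ℝ := fun v => Real.exp (-β * Rf v) with hf
  set Q0 : ℤ × ℤ × ℤ → ℝ := fun v => (v.2.1:ℝ) * (v.2.2:ℝ) with hQ0def
  set Q1 : ℤ × ℤ × ℤ → ℝ := fun v => ((g1 v).2.1 : ℝ) * ((g1 v).2.2 : ℝ) with hQ1def
  set Q2 : ℤ × ℤ × ℤ → ℝ := fun v => ((g2 v).2.1 : ℝ) * ((g2 v).2.2 : ℝ) with hQ2def
  have bound0 : ∀ v, |Q0 v| ≤ 3 * Nf v := by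
    rintro ⟨m, n, p⟩
    simp only [hQ0def, Nf]
    rw [abs_le]; constructor <;>
      nlinarith [sq_nonneg ((n:ℝ)+p), sq_nonneg ((n:ℝ)-p), sq_nonneg (m:ℝ)]
  have bound1 : ∀ v, |Q1 v| ≤ 3 * Nf v := by
    rintro ⟨m, n, p⟩
    simp only [hQ1def, Nf, g1, Equiv.coe_fn_mk]
    push_cast
    rw [abs_le]; constructor <;>
      nlinarith [sq_nonneg ((m:ℝ)+(m-n)), sq_nonneg ((m:ℝ)-(m-n)), sq_nonneg (p:ℝ),
        sq_nonneg ((m:ℝ)-n), sq_nonneg ((m:ℝ)+n)]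
  have bound2 : ∀ v, |Q2 v| ≤ 3 * Nf v := by
    rintro ⟨m, n, p⟩
    simp only [hQ2def, Nf, g2, Equiv.coe_fn_mk]
    push_cast
    rw [abs_le]; constructor <;>
      nlinarith [sq_nonneg ((n:ℝ)+p+(m+n+p)), sq_nonneg ((n:ℝ)+p-(m+n+p)),
        sq_nonneg ((n:ℝ)+p), sq_nonneg ((m:ℝ)+n+p), sq_nonneg ((n:ℝ)-p), sq_nonneg ((m:ℝ))]
  have boundR : ∀ v, |Rf v| ≤ 3 * Nf v := by
    rintro ⟨m, n, p⟩
    simp only [Rf, Nf]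
    rw [abs_le]; constructor <;>
      nlinarith [sq_nonneg ((m:ℝ)+p), sq_nonneg ((n:ℝ)+p), sq_nonneg ((m:ℝ)-p),
        sq_nonneg ((n:ℝ)-p)]
  have s0 : Summable fun v => Q0 v * f v := key_summable hβ Q0 bound0
  have s1 : Summable fun v => Q1 v * f v := key_summable hβ Q1 bound1
  have s2 : Summable fun v => Q2 v * f v := key_summable hβ Q2 bound2
  have sR : Summable fun v => Rf v * f v := key_summable hβ Rf boundR
  -- change of variables
  have hT1 : ∑' v, Q1 v * f v = ∑' v, Q0 v * f v := by
    have := Equiv.tsum_eq g1 (fun v => Q0 v * f v)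
    rw [← this]
    refine tsum_congr fun v => ?_
    simp only [hQ0def, hQ1def, hf, Rf_g1]
  have hT2 : ∑' v, Q2 v * f v = ∑' v, Q0 v * f v := by
    have := Equiv.tsum_eq g2 (fun v => Q0 v * f v)
    rw [← this]
    refine tsum_congr fun v => ?_
    simp only [hQ0def, hQ2def, hf, Rf_g2]
  have hsum3 : ∑' v, Q0 v * f v + ∑' v, Q1 v * f v + ∑' v, Q2 v * f v
      = - ∑' v, Rf v * f v := by
    rw [← Summable.tsum_add s0 s1, ← Summable.tsum_add (s0.add s1) s2, ← tsum_neg]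
    refine tsum_congr fun v => ?_
    obtain ⟨m, n, p⟩ := v
    simp only [hQ0def, hQ1def, hQ2def, Rf, g1, g2, Equiv.coe_fn_mk]
    push_cast
    ring
  have key : ∑' v, Q0 v * f v = (-(1/3)) * ∑' v, Rf v * f v := by
    rw [hT1, hT2] at hsum3; linarith
  calc ∑' v : ℤ × ℤ × ℤ,
      ((v.2.1:ℝ) * (v.2.2:ℝ) *
        Real.exp (-β * ((v.1:ℝ)^2 + (v.2.1:ℝ)^2 + (v.2.2:ℝ)^2
          + v.1 * v.2.2 + v.2.1 * v.2.2)))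
      = ∑' v, Q0 v * f v := by rfl
    _ = (-(1/3)) * ∑' v, Rf v * f v := key
    _ = _ := by rfl
end

section
/- For every t ≥ 2, the sum of T(m,n,p) = mn(m+p)(n+p) over all integer triples (m,n,p) with R(m,n,p) = m² + n² + p² + mp + np ≤ t is strictly positive. -/
/-- The FCC quadratic form. -/
def Rq (v : ℤ × ℤ × ℤ) : ℤ :=
  v.1^2 + v.2.1^2 + v.2.2^2 + v.1 * v.2.2 + v.2.1 * v.2.2

def Tq (v : ℤ × ℤ × ℤ) : ℤ := v.1 * v.2.1 * (v.1 + v.2.2) * (v.2.1 + v.2.2)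

def av (v : ℤ × ℤ × ℤ) : ℤ := v.1 * (v.1 + v.2.2)

def bv (v : ℤ × ℤ × ℤ) : ℤ := v.2.1 * (v.2.1 + v.2.2)

def phiE (v : ℤ × ℤ × ℤ) : ℤ × ℤ × ℤ := (-v.1, v.2.1 - v.1, 2 * v.1 + v.2.2)

def psiE (v : ℤ × ℤ × ℤ) : ℤ × ℤ × ℤ := (v.1 - v.2.1, -v.2.1, 2 * v.2.1 + v.2.2)

def sigE (t : ℤ) (v : ℤ × ℤ × ℤ) : ℤ × ℤ × ℤ :=
  if av v < 0 ∧ 0 < bv v then phiE v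
  else if 0 < av v ∧ av v < bv v ∧ Rq v + av v ≤ t then phiE v
  else if bv v < 0 ∧ 0 < av v then psiE v
  else if 0 < bv v ∧ bv v < av v ∧ Rq v + bv v ≤ t then psiE v
  else v

lemma Tq_eq (v : ℤ × ℤ × ℤ) : Tq v = av v * bv v := by
  obtain ⟨m, n, p⟩ := v; simp only [Tq, av, bv]; ring

lemma Rq_phi (v : ℤ × ℤ × ℤ) : Rq (phiE v) = Rq v + av v := by
  obtain ⟨m, n, p⟩ := v; simp only [Rq, phiE, av]; ring

lemma Tq_phi (v : ℤ × ℤ × ℤ) : Tq v + Tq (phiE v) = (av v)^2 := by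
  obtain ⟨m, n, p⟩ := v; simp only [Tq, phiE, av]; ring

lemma av_phi (v : ℤ × ℤ × ℤ) : av (phiE v) = -av v := by
  obtain ⟨m, n, p⟩ := v; simp only [phiE, av]; ring

lemma bv_phi (v : ℤ × ℤ × ℤ) : bv (phiE v) = bv v - av v := by
  obtain ⟨m, n, p⟩ := v; simp only [phiE, bv, av]; ring

lemma phi_phi (v : ℤ × ℤ × ℤ) : phiE (phiE v) = v := by
  obtain ⟨m, n, p⟩ := v
  simp only [phiE, Prod.mk.injEq]
  refine ⟨by ring, by ring, by ring⟩

lemma Rq_psi (v : ℤ × ℤ × ℤ) : Rq (psiE v) = Rq v + bv v := by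
  obtain ⟨m, n, p⟩ := v; simp only [Rq, psiE, bv]; ring

lemma Tq_psi (v : ℤ × ℤ × ℤ) : Tq v + Tq (psiE v) = (bv v)^2 := by
  obtain ⟨m, n, p⟩ := v; simp only [Tq, psiE, bv]; ring

lemma av_psi (v : ℤ × ℤ × ℤ) : av (psiE v) = av v - bv v := by
  obtain ⟨m, n, p⟩ := v; simp only [psiE, av, bv]; ring

lemma bv_psi (v : ℤ × ℤ × ℤ) : bv (psiE v) = -bv v := by
  obtain ⟨m, n, p⟩ := v; simp only [psiE, bv]; ring

lemma psi_psi (v : ℤ × ℤ × ℤ) : psiE (psiE v) = v := by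
  obtain ⟨m, n, p⟩ := v
  simp only [psiE, Prod.mk.injEq]
  refine ⟨by ring, by ring, by ring⟩

lemma Rq_sig {t : ℤ} {v : ℤ × ℤ × ℤ} (hv : Rq v ≤ t) : Rq (sigE t v) ≤ t := by
  unfold sigE
  split_ifs with h1 h2 h3 h4
  · rw [Rq_phi]; omega
  · rw [Rq_phi]; omega
  · rw [Rq_psi]; omega
  · rw [Rq_psi]; omega
  · exact hv

lemma sig_sig {t : ℤ} {v : ℤ × ℤ × ℤ} (hv : Rq v ≤ t) : sigE t (sigE t v) = v := by
  by_cases h1 : av v < 0 ∧ 0 < bv v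
  · have e1 : sigE t v = phiE v := by unfold sigE; rw [if_pos h1]
    have e2 : sigE t (phiE v) = phiE (phiE v) := by
      unfold sigE
      rw [if_neg (by rw [av_phi, bv_phi]; omega),
        if_pos (by rw [av_phi, bv_phi, Rq_phi]; refine ⟨by omega, by omega, by omega⟩)]
    rw [e1, e2, phi_phi]
  · by_cases h2 : 0 < av v ∧ av v < bv v ∧ Rq v + av v ≤ t
    · have e1 : sigE t v = phiE v := by unfold sigE; rw [if_neg h1, if_pos h2]
      have e2 : sigE t (phiE v) = phiE (phiE v) := by
        unfold sigE
        rw [if_pos (by rw [av_phi, bv_phi]; omega)]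
      rw [e1, e2, phi_phi]
    · by_cases h3 : bv v < 0 ∧ 0 < av v
      · have e1 : sigE t v = psiE v := by unfold sigE; rw [if_neg h1, if_neg h2, if_pos h3]
        have e2 : sigE t (psiE v) = psiE (psiE v) := by
          unfold sigE
          rw [if_neg (by rw [av_psi, bv_psi]; omega),
            if_neg (by rw [av_psi, bv_psi]; omega),
            if_neg (by rw [av_psi, bv_psi]; omega),
            if_pos (by rw [av_psi, bv_psi, Rq_psi]; refine ⟨by omega, by omega, by omega⟩)]
        rw [e1, e2, psi_psi]
      · by_cases h4 : 0 < bv v ∧ bv v < av v ∧ Rq v + bv v ≤ t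
        · have e1 : sigE t v = psiE v := by
            unfold sigE; rw [if_neg h1, if_neg h2, if_neg h3, if_pos h4]
          have e2 : sigE t (psiE v) = psiE (psiE v) := by
            unfold sigE
            rw [if_neg (by rw [av_psi, bv_psi]; omega),
              if_neg (by rw [av_psi, bv_psi]; omega),
              if_pos (by rw [av_psi, bv_psi]; omega)]
          rw [e1, e2, psi_psi]
        · have e1 : sigE t v = v := by
            unfold sigE; rw [if_neg h1, if_neg h2, if_neg h3, if_neg h4]
          rw [e1, e1]

lemma pair_nonneg (t : ℤ) (v : ℤ × ℤ × ℤ) : 0 ≤ Tq v + Tq (sigE t v) := by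
  unfold sigE
  split_ifs with h1 h2 h3 h4
  · rw [Tq_phi]; positivity
  · rw [Tq_phi]; positivity
  · rw [Tq_psi]; positivity
  · rw [Tq_psi]; positivity
  · have hab : 0 ≤ av v * bv v := by
      rcases lt_trichotomy (av v) 0 with h | h | h
      · rcases lt_trichotomy (bv v) 0 with h' | h' | h'
        · nlinarith
        · simp [h']
        · exact absurd ⟨h, h'⟩ h1
      · simp [h]
      · rcases lt_trichotomy (bv v) 0 with h' | h' | h'
        · exact absurd ⟨h', h⟩ h3
        · simp [h']
        · nlinarith
    rw [Tq_eq]; omega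

lemma mem_box {t m n p : ℤ} (ht : 2 ≤ t)
    (hv : m^2 + n^2 + p^2 + m*p + n*p ≤ t) :
    -(2*t) ≤ m ∧ m ≤ 2*t ∧ -(2*t) ≤ n ∧ n ≤ 2*t ∧ -(2*t) ≤ p ∧ p ≤ 2*t := by
  have h4 : (2*m+p)^2 + (2*n+p)^2 + 2*p^2 ≤ 4*t := by nlinarith
  have hp' : -(2*t) ≤ p ∧ p ≤ 2*t := by
    constructor <;> nlinarith [sq_nonneg (2*m+p), sq_nonneg (2*n+p), sq_nonneg (p - 2*t),
      sq_nonneg (p + 2*t)]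
  have hm' : -(2*t) ≤ 2*m+p ∧ 2*m+p ≤ 2*t := by
    constructor <;> nlinarith [sq_nonneg (2*n+p), sq_nonneg p, sq_nonneg (2*m+p - 2*t),
      sq_nonneg (2*m+p + 2*t)]
  have hn' : -(2*t) ≤ 2*n+p ∧ 2*n+p ≤ 2*t := by
    constructor <;> nlinarith [sq_nonneg (2*m+p), sq_nonneg p, sq_nonneg (2*n+p - 2*t),
      sq_nonneg (2*n+p + 2*t)]
  refine ⟨by omega, by omega, by omega, by omega, hp'.1, hp'.2⟩

theorem stmt10 (t : ℤ) (ht : 2 ≤ t) :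
    0 < ∑' v : ℤ × ℤ × ℤ,
      (if v.1^2 + v.2.1^2 + v.2.2^2 + v.1 * v.2.2 + v.2.1 * v.2.2 ≤ t
       then (v.1 * v.2.1 * (v.1 + v.2.2) * (v.2.1 + v.2.2) : ℝ)
       else 0) := by
  classical
  set box : Finset (ℤ × ℤ × ℤ) :=
    Finset.Icc (-(2*t)) (2*t) ×ˢ Finset.Icc (-(2*t)) (2*t) ×ˢ Finset.Icc (-(2*t)) (2*t) with hbox
  set F : Finset (ℤ × ℤ × ℤ) := box.filter (fun v => Rq v ≤ t) with hF
  have mem_F : ∀ v : ℤ × ℤ × ℤ, v ∈ F ↔ Rq v ≤ t := by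
    intro v
    simp only [hF, Finset.mem_filter, hbox, Finset.mem_product, Finset.mem_Icc,
      and_iff_right_iff_imp]
    intro hv
    simp only [Rq] at hv
    obtain ⟨h1, h2, h3, h4, h5, h6⟩ := mem_box ht hv
    exact ⟨⟨h1, h2⟩, ⟨h3, h4⟩, h5, h6⟩
  -- positivity of the integer sum
  have key : 0 < ∑ v ∈ F, Tq v := by
    have hre : ∑ v ∈ F, Tq (sigE t v) = ∑ v ∈ F, Tq v := by
      refine Finset.sum_nbij' (sigE t) (sigE t) ?_ ?_ ?_ ?_ ?_
      · intro a ha; rw [mem_F] at ha ⊢; exact Rq_sig ha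
      · intro a ha; rw [mem_F] at ha ⊢; exact Rq_sig ha
      · intro a ha; exact sig_sig ((mem_F a).1 ha)
      · intro a ha; exact sig_sig ((mem_F a).1 ha)
      · intro a ha; rfl
    have hdouble : ∑ v ∈ F, (Tq v + Tq (sigE t v)) = 2 * ∑ v ∈ F, Tq v := by
      rw [Finset.sum_add_distrib, hre]; ring
    have hpos : 0 < ∑ v ∈ F, (Tq v + Tq (sigE t v)) := by
      refine Finset.sum_pos' (fun v _ => pair_nonneg t v) ⟨(1, 1, 0), ?_, ?_⟩
      · rw [mem_F]; simp [Rq]; omega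
      · have hsig : sigE t (1, 1, 0) = (1, 1, 0) := by
          unfold sigE
          norm_num [av, bv]
        rw [hsig]; norm_num [Tq]
    omega
  -- convert the tsum to the finite sum
  have heq : ∑' v : ℤ × ℤ × ℤ,
      (if v.1^2 + v.2.1^2 + v.2.2^2 + v.1 * v.2.2 + v.2.1 * v.2.2 ≤ t
       then (v.1 * v.2.1 * (v.1 + v.2.2) * (v.2.1 + v.2.2) : ℝ)
       else 0) = ∑ v ∈ F, (Tq v : ℝ) := by
    rw [tsum_eq_sum (s := F) ?_]
    · refine Finset.sum_congr rfl fun v hv => ?_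
      rw [mem_F] at hv
      simp only [Rq] at hv
      rw [if_pos hv]
      simp only [Tq]
      push_cast
      ring
    · intro v hv
      rw [if_neg]
      intro hc
      exact hv ((mem_F v).2 (by simpa [Rq] using hc))
  rw [heq]
  have : (0 : ℝ) < ((∑ v ∈ F, Tq v : ℤ) : ℝ) := by exact_mod_cast key
  rwa [Int.cast_sum] at this
end

section
/- For every β > 0, 2β·(∑_{n∈ℤ} n² e^{−βn²}) < ∑_{n∈ℤ} e^{−βn²}; equivalently, ∑_{n∈ℤ} (2βn² − 1)·e^{−βn²} < 0. -/
/-!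
Write `θ x = ∑ₙ exp (-x n²)`. Poisson summation gives `√x · θ x = √π · θ (π² / x)`.
Differentiating at `β` and using `θ' x = -∑ₙ n² exp (-x n²)`, the left side has derivative
`(θ β - 2β ∑ₙ n² exp (-β n²)) / (2√β)`, while the right side has derivative
`√π (π² / β²) ∑ₙ n² exp (-(π² / β) n²) > 0`, because `θ` is decreasing and `x ↦ π² / x` is too.
-/

open Real

noncomputable def theta (x : ℝ) : ℝ := ∑' n : ℤ, exp (-x * (n : ℝ) ^ 2)

lemma summable_pow_mul_exp_neg_mul_sq (k : ℕ) {c : ℝ} (hc : 0 < c) :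
    Summable fun n : ℤ => (n : ℝ) ^ k * exp (-c * (n : ℝ) ^ 2) := by
  have hnat : Summable fun n : ℕ => (n : ℝ) ^ k * exp (-c * (n : ℝ) ^ 2) := by
    refine (summable_pow_mul_exp_neg_nat_mul k hc).of_nonneg_of_le (fun n => by positivity)
      fun n => ?_
    have hn : (n : ℝ) ≤ (n : ℝ) ^ 2 := by exact_mod_cast Nat.le_self_pow two_ne_zero n
    exact mul_le_mul_of_nonneg_left (exp_le_exp.2 (by nlinarith)) (by positivity)
  refine .of_nat_of_neg (by simpa using hnat) ?_
  refine (hnat.mul_left ((-1) ^ k)).congr fun n => ?_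
  rw [Int.cast_neg, Int.cast_natCast, neg_pow, neg_sq]
  ring

lemma hasDerivAt_theta {x : ℝ} (hx : 0 < x) :
    HasDerivAt theta (-∑' n : ℤ, (n : ℝ) ^ 2 * exp (-x * (n : ℝ) ^ 2)) x := by
  have hmem : x ∈ Set.Ioi (x / 2) := by simp only [Set.mem_Ioi]; linarith
  rw [← tsum_neg]
  unfold theta
  refine hasDerivAt_tsum_of_isPreconnected
    (g' := fun (n : ℤ) y => -((n : ℝ) ^ 2 * exp (-y * (n : ℝ) ^ 2)))
    (summable_pow_mul_exp_neg_mul_sq 2 (half_pos hx)) isOpen_Ioi isPreconnected_Ioi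
    (fun n y _ => ?_) (fun n y hy => ?_) hmem
    (by simpa using summable_pow_mul_exp_neg_mul_sq 0 hx) hmem
  · exact ((hasDerivAt_neg y).mul_const ((n : ℝ) ^ 2)).exp.congr_deriv (by ring)
  · rw [norm_neg, norm_mul, norm_of_nonneg (sq_nonneg _), norm_of_nonneg (exp_pos _).le]
    gcongr
    exact (Set.mem_Ioi.1 hy).le

lemma sqrt_mul_theta {x : ℝ} (hx : 0 < x) : √x * theta x = √π * theta (π ^ 2 / x) := by
  have h := tsum_exp_neg_mul_int_sq (div_pos hx pi_pos)
  rw [show -π * (x / π) = -x by field_simp, show -π / (x / π) = -(π ^ 2 / x) by field_simp,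
    ← sqrt_eq_rpow, sqrt_div hx.le] at h
  rw [theta, theta, h]
  have : √x ≠ 0 := (sqrt_pos.2 hx).ne'
  field_simp

lemma two_mul_mul_tsum_sq_mul_exp_lt_theta {β : ℝ} (hβ : 0 < β) :
    2 * β * ∑' n : ℤ, (n : ℝ) ^ 2 * exp (-β * (n : ℝ) ^ 2) < theta β := by
  set M : ℝ → ℝ := fun x => ∑' n : ℤ, (n : ℝ) ^ 2 * exp (-x * (n : ℝ) ^ 2)
  have hγ : 0 < π ^ 2 / β := by positivity
  have hlhs : HasDerivAt (fun x => √x * theta x)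
      (1 / (2 * √β) * theta β + √β * -M β) β :=
    (hasDerivAt_sqrt hβ.ne').mul (hasDerivAt_theta hβ)
  have hrhs : HasDerivAt (fun x => √π * theta (π ^ 2 / x))
      (√π * (-M (π ^ 2 / β) * (π ^ 2 * -(β ^ 2)⁻¹))) β := by
    have hinv : HasDerivAt (fun x => π ^ 2 / x) (π ^ 2 * -(β ^ 2)⁻¹) β := by
      simpa [div_eq_mul_inv] using (hasDerivAt_inv hβ.ne').const_mul (π ^ 2)
    exact ((hasDerivAt_theta hγ).comp β hinv).const_mul √π
  have hjacobi : (fun x => √x * theta x) =ᶠ[nhds β] fun x => √π * theta (π ^ 2 / x) := by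
    filter_upwards [Ioi_mem_nhds hβ] with x hx
    exact sqrt_mul_theta hx
  have hderiv := hlhs.unique (hrhs.congr_of_eventuallyEq hjacobi)
  have hM : 0 < M (π ^ 2 / β) :=
    (summable_pow_mul_exp_neg_mul_sq 2 hγ).tsum_pos (fun n => by positivity) 1 (by simp [exp_pos])
  have hidentity : theta β - 2 * β * M β = 2 * √β * √π * M (π ^ 2 / β) * π ^ 2 / β ^ 2 := by
    field_simp at hderiv
    rw [sq_sqrt hβ.le] at hderiv
    rw [eq_div_iff (by positivity)]
    linarith
  have hpos : 0 < 2 * √β * √π * M (π ^ 2 / β) * π ^ 2 / β ^ 2 := by positivity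
  linarith

theorem stmt13 (β : ℝ) (hβ : 0 < β) :
    2 * β * ∑' n : ℤ, (n:ℝ)^2 * Real.exp (-β * (n:ℝ)^2)
      < ∑' n : ℤ, Real.exp (-β * (n:ℝ)^2) ∧
    ∑' n : ℤ, (2 * β * (n:ℝ)^2 - 1) * Real.exp (-β * (n:ℝ)^2) < 0 := by
  have hlt := two_mul_mul_tsum_sq_mul_exp_lt_theta hβ
  refine ⟨hlt, ?_⟩
  have hsplit : ∑' n : ℤ, (2 * β * (n:ℝ)^2 - 1) * Real.exp (-β * (n:ℝ)^2)
      = 2 * β * ∑' n : ℤ, (n:ℝ)^2 * Real.exp (-β * (n:ℝ)^2) - theta β := by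
    rw [theta, ← tsum_mul_left, ← Summable.tsum_sub
      ((summable_pow_mul_exp_neg_mul_sq 2 hβ).mul_left _)
      (by simpa using summable_pow_mul_exp_neg_mul_sq 0 hβ)]
    congr 1 with n
    ring
  linarith
end

section
/- Let θ₃(s) = ∑_{k∈ℤ} exp(−πk²s) for s > 0. Then for every s > 0, θ₃″(s)·θ₃(s) − θ₃′(s)² > −θ₃′(s)·θ₃(s)/s > 0. -/
noncomputable def theta3 (s : ℝ) : ℝ := ∑' k : ℤ, Real.exp (-Real.pi * (k:ℝ)^2 * s)

/-!
The first inequality says that the elasticity `E(s) = s θ₃'(s) / θ₃(s)` has positive derivative,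
since `θ₃(s)² E'(s) = θ₃ θ₃' + s (θ₃'' θ₃ - θ₃'²)`. Jacobi's identity `θ₃(1/s) = √s θ₃(s)`
gives `E(1/s) = -1/2 - E(s)`, hence `E'(1/s) = s² E'(s)`, so it suffices to treat `s ≥ 1`.
There, with the moments `Tₘ(s) = ∑ (πk²)ᵐ e^{-πk²s}`, we have `θ₃ = T₀ ≥ 1`, `θ₃' = -T₁ < 0`,
`θ₃'' = T₂ ≥ π T₁`, and `T₁ ≤ ∑ 2/(πk²) = 2π/3` because `x e^{-x} ≤ 2/x`; this leaves a margin
of at least `T₁ (sπ/3 - 1) > 0`.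
-/

open Real Filter Topology HurwitzZeta

noncomputable def elasticity (f : ℝ → ℝ) (x : ℝ) : ℝ := x * deriv f x / f x

lemma hasDerivAt_elasticity {f : ℝ → ℝ} {x : ℝ} (hf : DifferentiableAt ℝ f x)
    (hf' : DifferentiableAt ℝ (deriv f) x) (hx : f x ≠ 0) :
    HasDerivAt (elasticity f)
      ((f x * deriv f x + x * (deriv (deriv f) x * f x - deriv f x ^ 2)) / f x ^ 2) x := by
  refine (((hasDerivAt_id' x).fun_mul hf'.hasDerivAt).fun_div hf.hasDerivAt hx).congr_deriv ?_
  ring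

lemma elasticity_inv {f : ℝ → ℝ} {a x : ℝ} (hf : ∀ y, 0 < y → f y⁻¹ = y ^ a * f y)
    (hx : 0 < x) (hdx : DifferentiableAt ℝ f x) (hdx' : DifferentiableAt ℝ f x⁻¹)
    (hfx : f x ≠ 0) :
    elasticity f x⁻¹ = -a - elasticity f x := by
  have heq : (fun y => f y⁻¹) =ᶠ[𝓝 x] fun y => y ^ a * f y :=
    eventually_of_mem (Ioi_mem_nhds hx) hf
  have hL : HasDerivAt (fun y => f y⁻¹) (deriv f x⁻¹ * -(x ^ 2)⁻¹) x :=
    hdx'.hasDerivAt.comp x (hasDerivAt_inv hx.ne')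
  have hR : HasDerivAt (fun y => y ^ a * f y) (a * x ^ (a - 1) * f x + x ^ a * deriv f x) x :=
    (hasDerivAt_rpow_const (Or.inl hx.ne')).fun_mul hdx.hasDerivAt
  have h := (hL.congr_of_eventuallyEq heq.symm).unique hR
  rw [rpow_sub_one hx.ne'] at h
  have hxa : 0 < x ^ a := rpow_pos_of_pos hx a
  rw [elasticity, elasticity, hf x hx]
  field_simp at h ⊢
  linear_combination -h

lemma deriv_pos_of_map_inv_eq_sub {f : ℝ → ℝ} {c x : ℝ} (hf : ∀ y, 0 < y → f y⁻¹ = c - f y)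
    (hdiff : ∀ y, 0 < y → DifferentiableAt ℝ f y) (hpos : ∀ y, 1 ≤ y → 0 < deriv f y)
    (hx : 0 < x) : 0 < deriv f x := by
  rcases le_or_gt 1 x with h1 | h1
  · exact hpos x h1
  have hsymm : (fun y => c - f y⁻¹) =ᶠ[𝓝 x] f :=
    eventually_of_mem (Ioi_mem_nhds hx) fun y hy => by
      change c - f y⁻¹ = f y
      rw [hf y hy]
      ring
  have hderiv : HasDerivAt (fun y => c - f y⁻¹) (-(deriv f x⁻¹ * -(x ^ 2)⁻¹)) x :=
    ((hdiff x⁻¹ (inv_pos.2 hx)).hasDerivAt.comp x (hasDerivAt_inv hx.ne')).const_sub c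
  rw [(hderiv.congr_of_eventuallyEq hsymm.symm).deriv, mul_neg, neg_neg]
  exact mul_pos (hpos _ ((one_le_inv₀ hx).2 h1.le)) (by positivity)

lemma mul_exp_neg_le_two_div {y : ℝ} (hy : 0 ≤ y) : y * exp (-y) ≤ 2 / y := by
  rcases hy.eq_or_lt with rfl | hy
  · simp
  rw [le_div_iff₀ hy, exp_neg]
  have := quadratic_le_exp_of_nonneg hy.le
  field_simp
  nlinarith

lemma hasSum_one_div_int_sq : HasSum (fun n : ℤ => 1 / (n : ℝ) ^ 2) (π ^ 2 / 3) := by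
  have hnat : HasSum (fun n : ℕ => 1 / ((n : ℤ) : ℝ) ^ 2) (π ^ 2 / 6) := by
    simpa only [Int.cast_natCast] using hasSum_zeta_two
  have hneg : HasSum (fun n : ℕ => 1 / ((-n : ℤ) : ℝ) ^ 2) (π ^ 2 / 6) := by
    simpa only [Int.cast_neg, neg_sq] using hnat
  have h := HasSum.of_nat_of_neg (f := fun n : ℤ => 1 / (n : ℝ) ^ 2) hnat hneg
  rwa [Int.cast_zero, zero_pow two_ne_zero, div_zero, sub_zero,
    show π ^ 2 / 6 + π ^ 2 / 6 = π ^ 2 / 3 by ring] at h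

noncomputable def thetaMoment (m : ℕ) (s : ℝ) : ℝ :=
  ∑' k : ℤ, (π * (k : ℝ) ^ 2) ^ m * exp (-π * (k : ℝ) ^ 2 * s)

lemma summable_thetaMoment (m : ℕ) {s : ℝ} (hs : 0 < s) :
    Summable fun k : ℤ => (π * (k : ℝ) ^ 2) ^ m * exp (-π * (k : ℝ) ^ 2 * s) := by
  refine ((summable_pow_mul_jacobiTheta₂_term_bound 0 hs (2 * m)).mul_left (π ^ m)).congr
    fun k => ?_
  rw [pow_mul, Int.cast_abs, sq_abs]
  ring_nf

lemma hasDerivAt_thetaMoment (m : ℕ) {s : ℝ} (hs : 0 < s) :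
    HasDerivAt (thetaMoment m) (-thetaMoment (m + 1) s) s := by
  have hterm (k : ℤ) (y : ℝ) :
      HasDerivAt (fun x => (π * (k : ℝ) ^ 2) ^ m * exp (-π * (k : ℝ) ^ 2 * x))
        (-((π * (k : ℝ) ^ 2) ^ (m + 1) * exp (-π * (k : ℝ) ^ 2 * y))) y := by
    refine (((hasDerivAt_id' y).const_mul (-π * (k : ℝ) ^ 2)).exp.const_mul _).congr_deriv ?_
    ring
  -- on `(s/2, ∞)` the derivatives are dominated by the terms of `thetaMoment (m + 1) (s / 2)`
  have hbound (k : ℤ) (y : ℝ) (hy : y ∈ Set.Ioi (s / 2)) :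
      ‖-((π * (k : ℝ) ^ 2) ^ (m + 1) * exp (-π * (k : ℝ) ^ 2 * y))‖ ≤
        (π * (k : ℝ) ^ 2) ^ (m + 1) * exp (-π * (k : ℝ) ^ 2 * (s / 2)) := by
    rw [norm_neg, Real.norm_of_nonneg (by positivity)]
    refine mul_le_mul_of_nonneg_left (exp_le_exp.2 ?_) (by positivity)
    nlinarith [mul_nonneg pi_pos.le (sq_nonneg (k : ℝ)), Set.mem_Ioi.1 hy]
  have hs2 : s ∈ Set.Ioi (s / 2) := by simp [hs]
  have := hasDerivAt_tsum_of_isPreconnected (summable_thetaMoment (m + 1) (half_pos hs))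
    isOpen_Ioi isPreconnected_Ioi (fun k y _ => hterm k y) hbound hs2
    (summable_thetaMoment m hs) hs2
  rwa [tsum_neg] at this

lemma one_le_thetaMoment_zero {s : ℝ} (hs : 0 < s) : 1 ≤ thetaMoment 0 s := by
  simpa [thetaMoment] using (summable_thetaMoment 0 hs).le_tsum 0 fun k _ => by positivity

lemma thetaMoment_pos (m : ℕ) {s : ℝ} (hs : 0 < s) : 0 < thetaMoment m s :=
  (summable_thetaMoment m hs).tsum_pos (fun k => by positivity) 1 (by positivity)

lemma pi_mul_thetaMoment_le_succ {m : ℕ} (hm : m ≠ 0) {s : ℝ} (hs : 0 < s) :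
    π * thetaMoment m s ≤ thetaMoment (m + 1) s := by
  rw [thetaMoment, ← tsum_mul_left]
  refine ((summable_thetaMoment m hs).mul_left π).tsum_le_tsum (fun k => ?_)
    (summable_thetaMoment (m + 1) hs)
  rcases eq_or_ne k 0 with rfl | hk
  · simp [hm]
  have hk2 : (1 : ℝ) ≤ (k : ℝ) ^ 2 := mod_cast (one_le_sq_iff_one_le_abs _).2 (Int.one_le_abs hk)
  have hterm : 0 ≤ (π * (k : ℝ) ^ 2) ^ m * exp (-π * (k : ℝ) ^ 2 * s) := by positivity
  rw [pow_succ (π * (k : ℝ) ^ 2) m]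
  nlinarith [mul_le_mul_of_nonneg_left hk2 (mul_nonneg pi_pos.le hterm)]

lemma thetaMoment_one_le {s : ℝ} (hs : 1 ≤ s) : thetaMoment 1 s ≤ 2 * π / 3 := by
  have hsum := hasSum_one_div_int_sq.mul_left (2 / π)
  rw [show 2 / π * (π ^ 2 / 3) = 2 * π / 3 by field_simp] at hsum
  refine hasSum_le (fun k => ?_) (summable_thetaMoment 1 (by linarith)).hasSum hsum
  have hy : 0 ≤ π * (k : ℝ) ^ 2 := by positivity
  calc (π * (k : ℝ) ^ 2) ^ 1 * exp (-π * (k : ℝ) ^ 2 * s)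
      ≤ π * (k : ℝ) ^ 2 * exp (-(π * (k : ℝ) ^ 2)) := by
        rw [pow_one]
        refine mul_le_mul_of_nonneg_left (exp_le_exp.2 ?_) hy
        nlinarith
    _ ≤ 2 / (π * (k : ℝ) ^ 2) := mul_exp_neg_le_two_div hy
    _ = 2 / π * (1 / (k : ℝ) ^ 2) := by ring

lemma thetaMoment_one_mul_zero_lt_of_one_le {s : ℝ} (hs : 1 ≤ s) :
    thetaMoment 1 s * thetaMoment 0 s <
      s * (thetaMoment 2 s * thetaMoment 0 s - thetaMoment 1 s ^ 2) := by
  have hs0 : 0 < s := by linarith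
  have hT0 := one_le_thetaMoment_zero hs0
  have hT1 := thetaMoment_pos 1 hs0
  have hT1le := thetaMoment_one_le hs
  have hT2 := pi_mul_thetaMoment_le_succ one_ne_zero hs0
  have hgap : 0 < (s * π - 1) * thetaMoment 0 s - s * thetaMoment 1 s := by
    have hsπ : 0 ≤ s * π - 1 := by nlinarith [pi_gt_three]
    nlinarith [pi_gt_three, mul_nonneg hsπ (sub_nonneg.2 hT0),
      mul_nonneg hs0.le (sub_nonneg.2 hT1le)]
  calc thetaMoment 1 s * thetaMoment 0 s
      < thetaMoment 1 s * thetaMoment 0 s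
        + thetaMoment 1 s * ((s * π - 1) * thetaMoment 0 s - s * thetaMoment 1 s) := by
        nlinarith
    _ = s * (π * thetaMoment 1 s * thetaMoment 0 s - thetaMoment 1 s ^ 2) := by ring
    _ ≤ s * (thetaMoment 2 s * thetaMoment 0 s - thetaMoment 1 s ^ 2) := by
        gcongr

lemma theta3_eq_thetaMoment_zero : theta3 = thetaMoment 0 := by
  ext s
  simp [theta3, thetaMoment]

lemma theta3_eq_evenKernel {s : ℝ} (hs : 0 < s) : theta3 s = evenKernel 0 s := by
  simpa [theta3] using (hasSum_int_evenKernel 0 hs).tsum_eq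

lemma theta3_inv {x : ℝ} (hx : 0 < x) : theta3 x⁻¹ = x ^ (1 / 2 : ℝ) * theta3 x := by
  have hfe := evenKernel_functional_equation 0 x
  rw [evenKernel_eq_cosKernel_of_zero, ← evenKernel_eq_cosKernel_of_zero, one_div x] at hfe
  have hpos : 0 < x ^ (1 / 2 : ℝ) := rpow_pos_of_pos hx _
  rw [theta3_eq_evenKernel hx, theta3_eq_evenKernel (inv_pos.2 hx), hfe]
  field_simp

lemma theta3_pos {s : ℝ} (hs : 0 < s) : 0 < theta3 s := by
  rw [theta3_eq_thetaMoment_zero]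
  exact thetaMoment_pos 0 hs

lemma hasDerivAt_theta3 {s : ℝ} (hs : 0 < s) : HasDerivAt theta3 (-thetaMoment 1 s) s :=
  theta3_eq_thetaMoment_zero ▸ hasDerivAt_thetaMoment 0 hs

lemma hasDerivAt_deriv_theta3 {s : ℝ} (hs : 0 < s) :
    HasDerivAt (deriv theta3) (thetaMoment 2 s) s := by
  have heq : deriv theta3 =ᶠ[𝓝 s] fun x => -thetaMoment 1 x :=
    eventually_of_mem (Ioi_mem_nhds hs) fun x hx => (hasDerivAt_theta3 hx).deriv
  simpa using (hasDerivAt_thetaMoment 1 hs).neg.congr_of_eventuallyEq heq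

lemma hasDerivAt_elasticity_theta3 {s : ℝ} (hs : 0 < s) :
    HasDerivAt (elasticity theta3)
      ((theta3 s * deriv theta3 s + s * (deriv (deriv theta3) s * theta3 s - deriv theta3 s ^ 2))
        / theta3 s ^ 2) s :=
  hasDerivAt_elasticity (hasDerivAt_theta3 hs).differentiableAt
    (hasDerivAt_deriv_theta3 hs).differentiableAt (theta3_pos hs).ne'

lemma deriv_elasticity_theta3_pos {s : ℝ} (hs : 0 < s) : 0 < deriv (elasticity theta3) s := by
  refine deriv_pos_of_map_inv_eq_sub (c := -(1 / 2)) (fun y hy => ?_)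
    (fun y hy => (hasDerivAt_elasticity_theta3 hy).differentiableAt) (fun y hy => ?_) hs
  · exact elasticity_inv (fun _ => theta3_inv) hy (hasDerivAt_theta3 hy).differentiableAt
      (hasDerivAt_theta3 (inv_pos.2 hy)).differentiableAt (theta3_pos hy).ne'
  · have hy0 : 0 < y := by linarith
    rw [(hasDerivAt_elasticity_theta3 hy0).deriv, (hasDerivAt_theta3 hy0).deriv,
      (hasDerivAt_deriv_theta3 hy0).deriv, theta3_eq_thetaMoment_zero]
    have := thetaMoment_one_mul_zero_lt_of_one_le hy
    exact div_pos (by linarith) (pow_pos (thetaMoment_pos 0 hy0) 2)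

theorem stmt14 (s : ℝ) (hs : 0 < s) :
    deriv (deriv theta3) s * theta3 s - (deriv theta3 s)^2
      > -(deriv theta3 s) * theta3 s / s ∧
    -(deriv theta3 s) * theta3 s / s > 0 := by
  have hθ := theta3_pos hs
  have hθ' : deriv theta3 s < 0 := by
    rw [(hasDerivAt_theta3 hs).deriv, neg_lt_zero]
    exact thetaMoment_pos 1 hs
  have hE := deriv_elasticity_theta3_pos hs
  rw [(hasDerivAt_elasticity_theta3 hs).deriv, div_pos_iff_of_pos_right (by positivity)] at hE
  constructor
  · rw [gt_iff_lt, div_lt_iff₀ hs]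
    linarith
  · exact div_pos (mul_pos (neg_pos.2 hθ') hθ) hs
end

section
/- For every β > 0, ∑_{(n,p)∈ℤ²} (3β(p⁴ − p²n²) − p²)·e^{−β(n²+p²)} > 0. -/
open Real

noncomputable def thS (m : ℕ) (x : ℝ) : ℝ :=
  ∑' k : ℤ, (k : ℝ) ^ (2 * m) * Real.exp (-x * (k : ℝ) ^ 2)

lemma even_term (m : ℕ) (x : ℝ) (a : ℝ) :
    (-a) ^ (2 * m) * Real.exp (-x * (-a) ^ 2) = a ^ (2 * m) * Real.exp (-x * a ^ 2) := by
  rw [Even.neg_pow (even_two_mul m), neg_sq]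

lemma nat_term_le (m : ℕ) {x : ℝ} (hx : 0 < x) (n : ℕ) :
    ((n : ℝ)) ^ (2 * m) * Real.exp (-x * (n : ℝ) ^ 2)
      ≤ (n : ℝ) ^ (2 * m) * Real.exp (-x) ^ n := by
  rw [← Real.exp_nat_mul]
  apply mul_le_mul_of_nonneg_left _ (by positivity)
  apply Real.exp_le_exp.2
  have h : (n : ℝ) ≤ (n : ℝ) ^ 2 := by exact_mod_cast Nat.le_self_pow (by norm_num) n
  nlinarith [hx.le]

lemma summable_nat (m : ℕ) {x : ℝ} (hx : 0 < x) :
    Summable (fun n : ℕ => ((n : ℝ)) ^ (2 * m) * Real.exp (-x * (n : ℝ) ^ 2)) := by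
  apply Summable.of_nonneg_of_le (fun n => by positivity) (nat_term_le m hx)
  simpa using summable_pow_mul_geometric_of_norm_lt_one (2 * m)
    (r := Real.exp (-x))
    (by rw [Real.norm_eq_abs, abs_of_pos (Real.exp_pos _)]
        exact Real.exp_lt_one_iff.2 (by linarith))

lemma summable_nat_shift (m : ℕ) {x : ℝ} (hx : 0 < x) :
    Summable (fun n : ℕ => ((n : ℝ) + 1) ^ (2 * m) * Real.exp (-x * ((n : ℝ) + 1) ^ 2)) := by
  have := (summable_nat_add_iff 1).2 (summable_nat m hx)
  exact this.congr (fun n => by push_cast; ring_nf)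

lemma neg_succ_term (m : ℕ) (x : ℝ) (n : ℕ) :
    ((-((n : ℤ) + 1) : ℤ) : ℝ) ^ (2 * m) * Real.exp (-x * ((-((n : ℤ) + 1) : ℤ) : ℝ) ^ 2)
      = ((n : ℝ) + 1) ^ (2 * m) * Real.exp (-x * ((n : ℝ) + 1) ^ 2) := by
  have h : ((-((n : ℤ) + 1) : ℤ) : ℝ) = -((n : ℝ) + 1) := by push_cast; ring
  rw [h, even_term]

lemma nat_cast_term (m : ℕ) (x : ℝ) (n : ℕ) :
    (((n : ℤ) : ℝ)) ^ (2 * m) * Real.exp (-x * (((n : ℤ) : ℝ)) ^ 2)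
      = ((n : ℝ)) ^ (2 * m) * Real.exp (-x * ((n : ℝ)) ^ 2) := by
  norm_num

lemma summable_thS (m : ℕ) {x : ℝ} (hx : 0 < x) :
    Summable (fun k : ℤ => (k : ℝ) ^ (2 * m) * Real.exp (-x * (k : ℝ) ^ 2)) := by
  apply Summable.of_nat_of_neg_add_one
  · exact (summable_nat m hx).congr (fun n => (nat_cast_term m x n).symm)
  · exact (summable_nat_shift m hx).congr (fun n => (neg_succ_term m x n).symm)

set_option maxHeartbeats 1000000 in
lemma thS_eq_nat (m : ℕ) {x : ℝ} (hx : 0 < x) :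
    thS m x = (0:ℝ) ^ (2 * m)
      + 2 * ∑' n : ℕ, ((n : ℝ) + 1) ^ (2 * m) * Real.exp (-x * ((n : ℝ) + 1) ^ 2) := by
  have h1 : Summable (fun n : ℕ => (((n : ℤ) : ℝ)) ^ (2 * m) * Real.exp (-x * (((n : ℤ) : ℝ)) ^ 2)) :=
    (summable_nat m hx).congr (fun n => (nat_cast_term m x n).symm)
  have h2 : Summable (fun n : ℕ =>
      ((-((n : ℤ) + 1) : ℤ) : ℝ) ^ (2 * m) * Real.exp (-x * ((-((n : ℤ) + 1) : ℤ) : ℝ) ^ 2)) :=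
    (summable_nat_shift m hx).congr (fun n => (neg_succ_term m x n).symm)
  have key := tsum_of_nat_of_neg_add_one (f := fun k : ℤ => (k:ℝ)^(2*m) * Real.exp (-x*(k:ℝ)^2)) h1 h2
  rw [thS]
  rw [key]
  have e2 : ∑' n : ℕ, ((-((n:ℤ) + 1) : ℤ) : ℝ) ^ (2 * m) * Real.exp (-x * ((-((n:ℤ) + 1) : ℤ) : ℝ) ^ 2)
      = ∑' n : ℕ, ((n : ℝ) + 1) ^ (2 * m) * Real.exp (-x * ((n : ℝ) + 1) ^ 2) :=
    tsum_congr (fun n => neg_succ_term m x n)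
  have e1 : ∑' n : ℕ, (((n:ℤ) : ℝ)) ^ (2 * m) * Real.exp (-x * (((n:ℤ) : ℝ)) ^ 2)
      = (0:ℝ) ^ (2*m) * Real.exp (-x * (0:ℝ)^2)
        + ∑' n : ℕ, ((n : ℝ) + 1) ^ (2 * m) * Real.exp (-x * ((n : ℝ) + 1) ^ 2) := by
    rw [Summable.tsum_eq_zero_add h1]
    congr 1
    · norm_num
    · refine tsum_congr (fun n => ?_)
      push_cast
      ring_nf
  rw [e1, e2]
  norm_num
  ring

lemma thS_pos_term_nonneg (m : ℕ) (x : ℝ) (k : ℤ) :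
    0 ≤ (k : ℝ) ^ (2 * m) * Real.exp (-x * (k : ℝ) ^ 2) := by
  rw [pow_mul]
  positivity

lemma thS_nonneg (m : ℕ) (x : ℝ) : 0 ≤ thS m x :=
  tsum_nonneg (fun k => thS_pos_term_nonneg m x k)

lemma thS0_poisson {x : ℝ} (hx : 0 < x) :
    thS 0 x = Real.sqrt (π / x) * thS 0 (π ^ 2 / x) := by
  have hπ := Real.pi_pos
  have ha : 0 < x / π := div_pos hx hπ
  have h := Real.tsum_exp_neg_mul_int_sq ha
  have e1 : ∀ n : ℤ, -π * (x / π) * (n : ℝ) ^ 2 = -x * (n : ℝ) ^ 2 := by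
    intro n
    have hh : -π * (x / π) = -x := by field_simp
    rw [hh]
  have e2 : ∀ n : ℤ, -π / (x / π) * (n : ℝ) ^ 2 = -(π ^ 2 / x) * (n : ℝ) ^ 2 := by
    intro n
    have hh : -π / (x / π) = -(π ^ 2 / x) := by
      rw [div_div_eq_mul_div]; ring
    rw [hh]
  simp only [e1, e2] at h
  have e3 : (1 : ℝ) / (x / π) ^ ((1:ℝ) / 2) = Real.sqrt (π / x) := by
    rw [← Real.sqrt_eq_rpow, one_div, ← Real.sqrt_inv, inv_div]
  rw [e3] at h
  simp only [thS, pow_zero, one_mul, Nat.mul_zero]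
  convert h using 3 <;> ring_nf

lemma thS0_ge_one {c : ℝ} (hc : 0 < c) : 1 ≤ thS 0 c := by
  rw [thS_eq_nat 0 hc]
  have : 0 ≤ ∑' n : ℕ, ((n : ℝ) + 1) ^ (2 * 0) * Real.exp (-c * ((n : ℝ) + 1) ^ 2) :=
    tsum_nonneg (fun n => by positivity)
  have h : ((0:ℝ)) ^ (2 * 0) = 1 := by norm_num
  rw [h]
  linarith

lemma exp_17_big : (24000000 : ℝ) ≤ Real.exp 17 := by
  have h := Real.exp_one_gt_d9
  have e : Real.exp 17 = Real.exp 1 ^ (17 : ℕ) := by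
    rw [← Real.exp_nat_mul]; norm_num
  rw [e]
  have : (2.7182818283 : ℝ) ^ (17 : ℕ) ≤ Real.exp 1 ^ (17 : ℕ) :=
    pow_le_pow_left₀ (by norm_num) h.le 17
  nlinarith [this]

lemma thS0_le {c : ℝ} (hc : 17 ≤ c) : thS 0 c ≤ 1 + 1 / 1000000 := by
  have hc0 : 0 < c := by linarith
  rw [thS_eq_nat 0 hc0]
  have hr0 : 0 < Real.exp (-c) := Real.exp_pos _
  have hr : Real.exp (-c) ≤ 1 / 24000000 := by
    rw [Real.exp_neg, one_div]
    apply inv_anti₀ (by norm_num)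
    exact le_trans exp_17_big (Real.exp_le_exp.2 hc)
  have hsum : Summable (fun n : ℕ => Real.exp (-c) ^ (n + 1)) := by
    apply Summable.comp_injective _ (add_left_injective 1)
    exact summable_geometric_of_lt_one hr0.le (by nlinarith)
  have hterm : ∀ n : ℕ, ((n : ℝ) + 1) ^ (2 * 0) * Real.exp (-c * ((n : ℝ) + 1) ^ 2)
      ≤ Real.exp (-c) ^ (n + 1) := by
    intro n
    have e : Real.exp (-c) ^ (n + 1) = Real.exp (-c * ((n : ℝ) + 1)) := by
      rw [← Real.exp_nat_mul]
      congr 1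
      push_cast; ring
    rw [e]
    norm_num
    have h2 : 0 ≤ c * ((n:ℝ) + 1) * (n:ℝ) := by positivity
    nlinarith [h2]
  have hle : ∑' n : ℕ, ((n : ℝ) + 1) ^ (2 * 0) * Real.exp (-c * ((n : ℝ) + 1) ^ 2)
      ≤ ∑' n : ℕ, Real.exp (-c) ^ (n + 1) := by
    apply Summable.tsum_le_tsum hterm _ hsum
    exact (summable_nat_shift 0 hc0)
  have hgeom : ∑' n : ℕ, Real.exp (-c) ^ (n + 1)
      = (1 - Real.exp (-c))⁻¹ * Real.exp (-c) := by
    have := tsum_geometric_of_lt_one hr0.le (show Real.exp (-c) < 1 by nlinarith)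
    calc ∑' n : ℕ, Real.exp (-c) ^ (n + 1) = ∑' n : ℕ, Real.exp (-c) ^ n * Real.exp (-c) := by
          apply tsum_congr; intro n; rw [pow_succ]
      _ = (∑' n : ℕ, Real.exp (-c) ^ n) * Real.exp (-c) := tsum_mul_right
      _ = (1 - Real.exp (-c))⁻¹ * Real.exp (-c) := by rw [this]
  have hinv : (1 - Real.exp (-c))⁻¹ ≤ 2 := by
    rw [inv_le_iff_one_le_mul₀ (by nlinarith)]
    nlinarith
  have : ∑' n : ℕ, Real.exp (-c) ^ (n + 1) ≤ 2 * (1 / 24000000) := by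
    rw [hgeom]
    have h0 : (0:ℝ) ≤ (1 - Real.exp (-c))⁻¹ := inv_nonneg.2 (by nlinarith)
    nlinarith
  norm_num at *
  linarith

lemma thS0_eq (y : ℝ) : thS 0 y = ∑' k : ℤ, Real.exp (-y * (k : ℝ) ^ 2) :=
  tsum_congr (fun k => by norm_num)

lemma summable_exp0 {y : ℝ} (hy : 0 < y) :
    Summable (fun k : ℤ => Real.exp (-y * (k : ℝ) ^ 2)) :=
  (summable_thS 0 hy).congr (fun k => by norm_num)

lemma S1_diff {x h : ℝ} (hh : 0 < h) (hxh : 0 < x - h) :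
    h * thS 1 x ≤ thS 0 (x - h) - thS 0 x := by
  have hx : 0 < x := by linarith
  rw [thS0_eq, thS0_eq,
    ← Summable.tsum_sub (summable_exp0 hxh) (summable_exp0 hx)]
  rw [thS, ← tsum_mul_left]
  apply Summable.tsum_le_tsum _ ((summable_thS 1 hx).mul_left h)
    ((summable_exp0 hxh).sub (summable_exp0 hx))
  intro k
  have key : Real.exp (-(x - h) * (k:ℝ) ^ 2)
      = Real.exp (-x * (k:ℝ) ^ 2) * Real.exp (h * (k:ℝ) ^ 2) := by
    rw [← Real.exp_add]; congr 1; ring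
  have hexp : 1 + h * (k:ℝ) ^ 2 ≤ Real.exp (h * (k:ℝ) ^ 2) := by
    have := Real.add_one_le_exp (h * (k:ℝ) ^ 2); linarith
  have hp := Real.exp_pos (-x * (k:ℝ) ^ 2)
  have hk2 : (0:ℝ) ≤ (k:ℝ) ^ 2 := sq_nonneg _
  rw [key]
  have e : (k:ℝ) ^ (2 * 1) = (k:ℝ) ^ 2 := by norm_num
  rw [e]
  nlinarith [mul_le_mul_of_nonneg_left hexp hp.le]

lemma S2_diff {x h : ℝ} (hh : 0 < h) (hx : 0 < x) :
    thS 0 x - 2 * thS 0 (x + h) + thS 0 (x + 2 * h) ≤ h ^ 2 * thS 2 x := by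
  have hx1 : 0 < x + h := by linarith
  have hx2 : 0 < x + 2 * h := by linarith
  rw [thS0_eq, thS0_eq, thS0_eq]
  rw [← tsum_mul_left (a := (2:ℝ)),
    ← Summable.tsum_sub (summable_exp0 hx) ((summable_exp0 hx1).mul_left 2),
    ← Summable.tsum_add (Summable.sub (summable_exp0 hx) ((summable_exp0 hx1).mul_left 2)) (summable_exp0 hx2)]
  rw [thS, ← tsum_mul_left]
  apply Summable.tsum_le_tsum _
    (((summable_exp0 hx).sub ((summable_exp0 hx1).mul_left 2)).add (summable_exp0 hx2))
    ((summable_thS 2 hx).mul_left (h ^ 2))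
  intro k
  have k2 : (0:ℝ) ≤ (k:ℝ) ^ 2 := sq_nonneg _
  have e1 : Real.exp (-(x + h) * (k:ℝ) ^ 2)
      = Real.exp (-x * (k:ℝ) ^ 2) * Real.exp (-(h * (k:ℝ) ^ 2)) := by
    rw [← Real.exp_add]; congr 1; ring
  have e2 : Real.exp (-(x + 2 * h) * (k:ℝ) ^ 2)
      = Real.exp (-x * (k:ℝ) ^ 2) * Real.exp (-(h * (k:ℝ) ^ 2)) ^ 2 := by
    rw [← Real.exp_nat_mul, ← Real.exp_add]; congr 1; push_cast; ring
  have hexp : 1 - h * (k:ℝ) ^ 2 ≤ Real.exp (-(h * (k:ℝ) ^ 2)) := by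
    have := Real.add_one_le_exp (-(h * (k:ℝ) ^ 2)); linarith
  have hep : 0 < Real.exp (-(h * (k:ℝ) ^ 2)) := Real.exp_pos _
  have hel : Real.exp (-(h * (k:ℝ) ^ 2)) ≤ 1 := by
    rw [Real.exp_le_one_iff]
    nlinarith
  have hp := (Real.exp_pos (-x * (k:ℝ) ^ 2)).le
  have e3 : (k:ℝ) ^ (2 * 2) = ((k:ℝ) ^ 2) ^ 2 := by ring
  rw [e1, e2, e3]
  -- goal: E - 2*(E*u) + E*u^2 ≤ h^2 * ((k²)² * E)  where u = exp(-(h k²)), E = exp(-x k²)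
  -- LHS = E*(1-u)^2, and (1-u) ≤ h k², 1-u ≥ 0
  have h1 : 0 ≤ 1 - Real.exp (-(h * (k:ℝ) ^ 2)) := by linarith
  have h2 : 1 - Real.exp (-(h * (k:ℝ) ^ 2)) ≤ h * (k:ℝ) ^ 2 := by linarith
  have h3 : (1 - Real.exp (-(h * (k:ℝ) ^ 2))) ^ 2 ≤ (h * (k:ℝ) ^ 2) ^ 2 :=
    pow_le_pow_left₀ h1 h2 2
  nlinarith [mul_le_mul_of_nonneg_left h3 hp]

lemma S0_eval {t : ℝ} (ht : 0 < t) (ht2 : t ≤ 9/16) :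
    Real.sqrt (π / t) ≤ thS 0 t ∧ thS 0 t ≤ Real.sqrt (π / t) * (1 + 1/1000000) := by
  have hπ : (3.141592 : ℝ) ≤ π := Real.pi_gt_d6.le
  have hc : 17 ≤ π ^ 2 / t := by
    rw [le_div_iff₀ ht]
    nlinarith
  have hcpos : 0 < π ^ 2 / t := by positivity
  have h1 := thS0_ge_one hcpos
  have h2 := thS0_le hc
  have hs : 0 ≤ Real.sqrt (π / t) := Real.sqrt_nonneg _
  rw [thS0_poisson ht]
  constructor
  · nlinarith
  · nlinarith

lemma sqrt_num1 : Real.sqrt (16 / 15) ≤ 1.0328 := by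
  rw [show (1.0328 : ℝ) = Real.sqrt (1.0328 ^ 2) from (Real.sqrt_sq (by norm_num)).symm]
  apply Real.sqrt_le_sqrt; norm_num

lemma sqrt_num2 : Real.sqrt (16 / 17) ≤ 0.97015 := by
  rw [show (0.97015 : ℝ) = Real.sqrt (0.97015 ^ 2) from (Real.sqrt_sq (by norm_num)).symm]
  apply Real.sqrt_le_sqrt; norm_num

lemma sqrt_num3 : (0.9428 : ℝ) ≤ Real.sqrt (8 / 9) := by
  rw [show (0.9428 : ℝ) = Real.sqrt (0.9428 ^ 2) from (Real.sqrt_sq (by norm_num)).symm]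
  apply Real.sqrt_le_sqrt; norm_num

set_option maxHeartbeats 2000000 in
lemma small_case {β : ℝ} (hβ : 0 < β) (hβ2 : β ≤ 1/2) :
    0 < 3 * β * (thS 2 β * thS 0 β - (thS 1 β) ^ 2) - thS 1 β * thS 0 β := by
  have hπ : (3.141592 : ℝ) ≤ π := Real.pi_gt_d6.le
  set P := Real.sqrt (π / β) with hPdef
  have hPpos : 0 < P := Real.sqrt_pos.2 (by positivity)
  -- S0 at the four points
  have h0 := S0_eval hβ (by linarith)
  have hmh := S0_eval (show 0 < 15 * β / 16 by linarith) (by linarith)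
  have hph := S0_eval (show 0 < 17 * β / 16 by linarith) (by linarith)
  have hp2h := S0_eval (show 0 < 9 * β / 8 by linarith) (by linarith)
  -- rewrite the sqrt's
  have emh : Real.sqrt (π / (15 * β / 16)) = P * Real.sqrt (16 / 15) := by
    rw [hPdef, ← Real.sqrt_mul (by positivity)]
    congr 1; field_simp
  have eph : Real.sqrt (π / (17 * β / 16)) = P * Real.sqrt (16 / 17) := by
    rw [hPdef, ← Real.sqrt_mul (by positivity)]
    congr 1; field_simp
  have ep2h : Real.sqrt (π / (9 * β / 8)) = P * Real.sqrt (8 / 9) := by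
    rw [hPdef, ← Real.sqrt_mul (by positivity)]
    congr 1; field_simp
  rw [emh] at hmh; rw [eph] at hph; rw [ep2h] at hp2h
  have hs1 := sqrt_num1; have hs2 := sqrt_num2; have hs3 := sqrt_num3
  have hsq2nn : 0 ≤ Real.sqrt (16/17) := Real.sqrt_nonneg _
  -- S0 bounds
  have hS0low : P ≤ thS 0 β := h0.1
  have hS0up : thS 0 β ≤ P * 1.000001 := by nlinarith [h0.2]
  have hS0mh_up : thS 0 (15 * β / 16) ≤ P * 1.03281 := by nlinarith [hmh.2]
  have hS0ph_up : thS 0 (17 * β / 16) ≤ P * 0.970151 := by nlinarith [hph.2]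
  have hS0p2h_low : P * 0.9428 ≤ thS 0 (9 * β / 8) := by nlinarith [hp2h.1]
  -- S1 bound via difference, with h = β/16
  have hd1 : (β / 16) * thS 1 β ≤ thS 0 (β - β / 16) - thS 0 β :=
    S1_diff (by linarith) (by linarith)
  have ed : β - β / 16 = 15 * β / 16 := by ring
  rw [ed] at hd1
  have hS1' : β * thS 1 β ≤ 16 * (P * 1.03281 - P) := by nlinarith [hd1]
  have hS1 : β * thS 1 β ≤ 0.5250 * P := by nlinarith [hS1']
  have hS1nn : 0 ≤ thS 1 β := thS_nonneg 1 β
  -- S2 bound via second difference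
  have hd2 : thS 0 β - 2 * thS 0 (β + β / 16) + thS 0 (β + 2 * (β / 16))
      ≤ (β / 16) ^ 2 * thS 2 β := S2_diff (by linarith) hβ
  have e1 : β + β / 16 = 17 * β / 16 := by ring
  have e2 : β + 2 * (β / 16) = 9 * β / 8 := by ring
  rw [e1, e2] at hd2
  have hS2 : 0.6394 * P ≤ β ^ 2 * thS 2 β := by nlinarith [hd2]
  have hS2nn : 0 ≤ thS 2 β := thS_nonneg 2 β
  have hS0nn : 0 ≤ thS 0 β := thS_nonneg 0 β
  -- products
  have hprod1 : (0.6394 * P) * P ≤ (β ^ 2 * thS 2 β) * thS 0 β :=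
    mul_le_mul hS2 hS0low hPpos.le (by positivity)
  have hprod2 : (β * thS 1 β) ^ 2 ≤ (0.5250 * P) ^ 2 :=
    pow_le_pow_left₀ (by positivity) hS1 2
  have hprod3 : (β * thS 1 β) * thS 0 β ≤ (0.5250 * P) * (P * 1.000001) :=
    mul_le_mul hS1 hS0up (by positivity) (by positivity)
  have hgoal : 0 < β * (3 * β * (thS 2 β * thS 0 β - (thS 1 β) ^ 2) - thS 1 β * thS 0 β) := by
    have expand : β * (3 * β * (thS 2 β * thS 0 β - (thS 1 β) ^ 2) - thS 1 β * thS 0 β)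
        = 3 * ((β ^ 2 * thS 2 β) * thS 0 β - (β * thS 1 β) ^ 2)
            - (β * thS 1 β) * thS 0 β := by ring
    rw [expand]
    nlinarith [hprod1, hprod2, hprod3, sq_nonneg P, hPpos]
  nlinarith [hgoal, hβ]

lemma poly_large {q : ℝ} (h0 : 0 < q) (h1 : q ≤ 0.60655) :
    0 < (3/2) * ((2*q+32*q^4)*(1+2*q) - (2*q+10.68*q^4)^2)
        - (2*q+10.68*q^4)*(1+2*q+3.17*q^4) := by
  rcases le_or_gt q (1/4) with hc | hc
  · have h4 : q^4 ≤ (1/4:ℝ)^4 := pow_le_pow_left₀ h0.le hc 4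
    have h8 : q^8 ≤ (1/256) * q^4 := by nlinarith [pow_pos h0 4]
    have hA : 0 ≤ q * (1 - 4*q) := mul_nonneg h0.le (by linarith)
    nlinarith [pow_pos h0 4, pow_pos h0 5, hA, h8]
  · have h4 : q^4 ≤ (0.60655:ℝ)^4 := pow_le_pow_left₀ h0.le h1 4
    have h8 : q^8 ≤ 0.13536 * q^4 := by nlinarith [pow_pos h0 4]
    have key : 0 < 1 - 4*q + 9.57*q^3 + 4.22*q^4 := by
      nlinarith [sq_nonneg (q - 0.34),
        mul_nonneg (mul_nonneg (sub_nonneg.2 hc.le) (sub_nonneg.2 h1)) (sq_nonneg (q-0.34)),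
        mul_nonneg (sub_nonneg.2 hc.le) (sq_nonneg (q-0.34)),
        mul_nonneg (sub_nonneg.2 h1) (sq_nonneg (q-0.34))]
    have key2 : 0 < q * (1 - 4*q + 9.57*q^3 + 4.22*q^4) := mul_pos h0 key
    nlinarith [key2, h8, pow_pos h0 4]

lemma exp_neg_half_le : Real.exp (-(1/2:ℝ)) ≤ 0.60655 := by
  have h1 : Real.exp (-(1/2:ℝ)) ^ (2:ℕ) = Real.exp (-1) := by
    rw [← Real.exp_nat_mul]; norm_num
  have h2 : Real.exp (-1:ℝ) ≤ 0.36788 := by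
    rw [Real.exp_neg]
    have := Real.exp_one_gt_d9
    rw [inv_le_comm₀ (by linarith) (by norm_num)]
    linarith
  nlinarith [Real.exp_pos (-(1/2:ℝ)), h1, h2]

lemma exp_pow_id {β : ℝ} (j : ℕ) : Real.exp (-β) ^ j = Real.exp (-((j:ℝ) * β)) := by
  rw [← Real.exp_nat_mul]; ring_nf

lemma t0_bound {β : ℝ} (hβ : 0 < β) (n : ℕ) :
    Real.exp (-β * ((n:ℝ) + 2) ^ 2) ≤ (Real.exp (-β) ^ 2) ^ (n + 2) := by
  rw [← pow_mul, exp_pow_id]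
  apply Real.exp_le_exp.2
  have hn : (0:ℝ) ≤ (n:ℝ) := Nat.cast_nonneg n
  push_cast
  nlinarith [mul_nonneg (mul_nonneg hβ.le hn) hn]

lemma sq_le_geom (n : ℕ) : ((n:ℝ) + 3) ^ 2 ≤ (9/8) * 2 ^ (n + 3) := by
  induction n with
  | zero => norm_num
  | succ m ih =>
    have e : (2:ℝ) ^ (m + 1 + 3) = 2 * 2 ^ (m + 3) := by ring
    have hm : (0:ℝ) ≤ (m:ℝ) := Nat.cast_nonneg m
    push_cast at ih ⊢
    rw [e]
    nlinarith [ih, hm]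

lemma t1_bound {β : ℝ} (hβ : 0 < β) (n : ℕ) :
    ((n:ℝ) + 3) ^ 2 * Real.exp (-β * ((n:ℝ) + 3) ^ 2)
      ≤ (9/8) * (2 * Real.exp (-β) ^ 3) ^ (n + 3) := by
  have he : Real.exp (-β * ((n:ℝ) + 3) ^ 2) ≤ (Real.exp (-β) ^ 3) ^ (n + 3) := by
    rw [← pow_mul, exp_pow_id]
    apply Real.exp_le_exp.2
    have hn : (0:ℝ) ≤ (n:ℝ) := Nat.cast_nonneg n
    push_cast
    nlinarith [mul_nonneg (mul_nonneg hβ.le hn) hn]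
  have hsq := sq_le_geom n
  have hppos : (0:ℝ) < (Real.exp (-β) ^ 3) ^ (n + 3) := by positivity
  have h2 : (0:ℝ) ≤ ((n:ℝ) + 3) ^ 2 := sq_nonneg _
  calc ((n:ℝ) + 3) ^ 2 * Real.exp (-β * ((n:ℝ) + 3) ^ 2)
      ≤ ((9/8) * 2 ^ (n + 3)) * (Real.exp (-β) ^ 3) ^ (n + 3) := by
        apply mul_le_mul hsq he (Real.exp_pos _).le (by positivity)
    _ = (9/8) * (2 * Real.exp (-β) ^ 3) ^ (n + 3) := by
        rw [mul_pow]; ring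

lemma S0_upper {β : ℝ} (hβ : 0 < β) (hq1 : Real.exp (-β) < 1) :
    thS 0 β ≤ 1 + 2 * Real.exp (-β)
      + 2 * (Real.exp (-β) ^ 4 * (1 - Real.exp (-β) ^ 2)⁻¹) := by
  have hq0 : 0 < Real.exp (-β) := Real.exp_pos _
  have hq2 : Real.exp (-β) ^ 2 < 1 := by nlinarith
  rw [thS_eq_nat 0 hβ]
  have hg : Summable (fun n : ℕ => Real.exp (-β * ((n:ℝ)+1) ^ 2)) :=
    (summable_nat_shift 0 hβ).congr (fun n => by norm_num)
  have hA' : ∑' n : ℕ, ((n:ℝ)+1) ^ (2*0) * Real.exp (-β * ((n:ℝ)+1) ^ 2)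
      = ∑' n : ℕ, Real.exp (-β * ((n:ℝ)+1) ^ 2) := tsum_congr (fun n => by norm_num)
  rw [hA', Summable.tsum_eq_zero_add hg]
  have e0 : Real.exp (-β * (((0:ℕ):ℝ)+1) ^ 2) = Real.exp (-β) := by norm_num
  have hshift : ∑' n : ℕ, Real.exp (-β * ((((n+1:ℕ)):ℝ)+1) ^ 2)
      = ∑' n : ℕ, Real.exp (-β * ((n:ℝ)+2) ^ 2) := by
    apply tsum_congr; intro n
    congr 2
    push_cast; ring
  rw [e0, hshift]
  have hgeom : Summable (fun n : ℕ => (Real.exp (-β) ^ 2) ^ (n + 2)) := by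
    apply Summable.congr ((summable_geometric_of_lt_one (by positivity) hq2).mul_right
      ((Real.exp (-β) ^ 2) ^ 2))
    intro n; rw [← pow_add]
  have hsumlhs : Summable (fun n : ℕ => Real.exp (-β * ((n:ℝ)+2) ^ 2)) :=
    Summable.of_nonneg_of_le (fun n => (Real.exp_pos _).le) (t0_bound hβ) hgeom
  have htail : ∑' n : ℕ, Real.exp (-β * ((n:ℝ)+2) ^ 2)
      ≤ Real.exp (-β) ^ 4 * (1 - Real.exp (-β) ^ 2)⁻¹ := by
    have h1 : ∑' n : ℕ, Real.exp (-β * ((n:ℝ)+2) ^ 2)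
        ≤ ∑' n : ℕ, (Real.exp (-β) ^ 2) ^ (n + 2) :=
      Summable.tsum_le_tsum (t0_bound hβ) hsumlhs hgeom
    have h2 : ∑' n : ℕ, (Real.exp (-β) ^ 2) ^ (n + 2)
        = Real.exp (-β) ^ 4 * (1 - Real.exp (-β) ^ 2)⁻¹ := by
      calc ∑' n : ℕ, (Real.exp (-β) ^ 2) ^ (n + 2)
          = ∑' n : ℕ, (Real.exp (-β) ^ 2) ^ n * (Real.exp (-β) ^ 2) ^ 2 := by
            apply tsum_congr; intro n; rw [← pow_add]
        _ = (1 - Real.exp (-β) ^ 2)⁻¹ * (Real.exp (-β) ^ 2) ^ 2 := by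
            rw [tsum_mul_right, tsum_geometric_of_lt_one (by positivity) hq2]
        _ = Real.exp (-β) ^ 4 * (1 - Real.exp (-β) ^ 2)⁻¹ := by rw [← pow_mul]; ring
    linarith
  have hz : ((0:ℝ)) ^ (2 * 0) = 1 := by norm_num
  rw [hz]
  linarith

lemma S1_upper {β : ℝ} (hβ : 0 < β) (hq3 : 2 * Real.exp (-β) ^ 3 < 1) :
    thS 1 β ≤ 2 * Real.exp (-β) + 8 * Real.exp (-β) ^ 4
      + 18 * (Real.exp (-β) ^ 9 * (1 - 2 * Real.exp (-β) ^ 3)⁻¹) := by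
  have hq0 : 0 < Real.exp (-β) := Real.exp_pos _
  rw [thS_eq_nat 1 hβ]
  have hg : Summable (fun n : ℕ => ((n:ℝ)+1) ^ 2 * Real.exp (-β * ((n:ℝ)+1) ^ 2)) :=
    (summable_nat_shift 1 hβ).congr (fun n => by norm_num)
  have hA' : ∑' n : ℕ, ((n:ℝ)+1) ^ (2*1) * Real.exp (-β * ((n:ℝ)+1) ^ 2)
      = ∑' n : ℕ, ((n:ℝ)+1) ^ 2 * Real.exp (-β * ((n:ℝ)+1) ^ 2) := tsum_congr (fun n => by norm_num)
  rw [hA', Summable.tsum_eq_zero_add hg]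
  have hg2 : Summable (fun n : ℕ => ((n:ℝ)+2) ^ 2 * Real.exp (-β * ((n:ℝ)+2) ^ 2)) := by
    apply ((summable_nat_add_iff 1).2 hg).congr
    intro n; push_cast; ring_nf
  have hshift : ∑' n : ℕ, ((((n+1:ℕ)):ℝ)+1) ^ 2 * Real.exp (-β * ((((n+1:ℕ)):ℝ)+1) ^ 2)
      = ∑' n : ℕ, ((n:ℝ)+2) ^ 2 * Real.exp (-β * ((n:ℝ)+2) ^ 2) := by
    apply tsum_congr; intro n
    have ec : (((n+1:ℕ)):ℝ) + 1 = (n:ℝ) + 2 := by push_cast; ring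
    rw [ec]
  rw [hshift, Summable.tsum_eq_zero_add hg2]
  have hshift2 : ∑' n : ℕ, ((((n+1:ℕ)):ℝ)+2) ^ 2 * Real.exp (-β * ((((n+1:ℕ)):ℝ)+2) ^ 2)
      = ∑' n : ℕ, ((n:ℝ)+3) ^ 2 * Real.exp (-β * ((n:ℝ)+3) ^ 2) := by
    apply tsum_congr; intro n
    have ec : (((n+1:ℕ)):ℝ) + 2 = (n:ℝ) + 3 := by push_cast; ring
    rw [ec]
  rw [hshift2]
  have hgeom : Summable (fun n : ℕ => (9/8) * (2 * Real.exp (-β) ^ 3) ^ (n + 3)) := by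
    apply Summable.mul_left
    apply Summable.congr ((summable_geometric_of_lt_one (by positivity) hq3).mul_right
      ((2 * Real.exp (-β) ^ 3) ^ 3))
    intro n; rw [← pow_add]
  have hsumlhs : Summable (fun n : ℕ => ((n:ℝ)+3) ^ 2 * Real.exp (-β * ((n:ℝ)+3) ^ 2)) :=
    Summable.of_nonneg_of_le (fun n => by positivity) (t1_bound hβ) hgeom
  have htail : ∑' n : ℕ, ((n:ℝ)+3) ^ 2 * Real.exp (-β * ((n:ℝ)+3) ^ 2)
      ≤ 9 * (Real.exp (-β) ^ 9 * (1 - 2 * Real.exp (-β) ^ 3)⁻¹) := by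
    have h1 := Summable.tsum_le_tsum (t1_bound hβ) hsumlhs hgeom
    have h2 : ∑' n : ℕ, (9/8) * (2 * Real.exp (-β) ^ 3) ^ (n + 3)
        = 9 * (Real.exp (-β) ^ 9 * (1 - 2 * Real.exp (-β) ^ 3)⁻¹) := by
      rw [tsum_mul_left]
      have h3 : ∑' n : ℕ, (2 * Real.exp (-β) ^ 3) ^ (n + 3)
          = (1 - 2 * Real.exp (-β) ^ 3)⁻¹ * (2 * Real.exp (-β) ^ 3) ^ 3 := by
        calc ∑' n : ℕ, (2 * Real.exp (-β) ^ 3) ^ (n + 3)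
            = ∑' n : ℕ, (2 * Real.exp (-β) ^ 3) ^ n * (2 * Real.exp (-β) ^ 3) ^ 3 := by
              apply tsum_congr; intro n; rw [← pow_add]
          _ = (1 - 2 * Real.exp (-β) ^ 3)⁻¹ * (2 * Real.exp (-β) ^ 3) ^ 3 := by
              rw [tsum_mul_right, tsum_geometric_of_lt_one (by positivity) hq3]
      rw [h3]
      have e : (2 * Real.exp (-β) ^ 3) ^ 3 = 8 * Real.exp (-β) ^ 9 := by ring
      rw [e]; ring
    linarith
  have e00 : ((((0:ℕ)):ℝ)+1) ^ 2 * Real.exp (-β * ((((0:ℕ)):ℝ)+1) ^ 2) = Real.exp (-β) := by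
    norm_num
  have e01 : ((((0:ℕ)):ℝ)+2) ^ 2 * Real.exp (-β * ((((0:ℕ)):ℝ)+2) ^ 2)
      = 4 * Real.exp (-β) ^ 4 := by
    have : Real.exp (-β) ^ 4 = Real.exp (-((4:ℝ) * β)) := exp_pow_id 4
    rw [this]
    norm_num
    ring
  have hz : ((0:ℝ)) ^ (2 * 1) = 0 := by norm_num
  rw [hz, e00, e01]
  linarith [htail]

lemma S0_lower {β : ℝ} (hβ : 0 < β) : 1 + 2 * Real.exp (-β) ≤ thS 0 β := by
  have h := Summable.sum_le_tsum ({-1,0,1} : Finset ℤ)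
    (fun k _ => thS_pos_term_nonneg 0 β k) (summable_thS 0 hβ)
  have e : ∑ k ∈ ({-1,0,1} : Finset ℤ), (k:ℝ) ^ (2*0) * Real.exp (-β * (k:ℝ) ^ 2)
      = 1 + 2 * Real.exp (-β) := by
    norm_num [Finset.sum_insert, Finset.mem_insert, Finset.mem_singleton]
    ring
  rw [e] at h
  exact h

lemma S2_lower {β : ℝ} (hβ : 0 < β) :
    2 * Real.exp (-β) + 32 * Real.exp (-β) ^ 4 ≤ thS 2 β := by
  have h := Summable.sum_le_tsum ({-2,-1,1,2} : Finset ℤ)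
    (fun k _ => thS_pos_term_nonneg 2 β k) (summable_thS 2 hβ)
  have e4 : Real.exp (-β) ^ 4 = Real.exp (-(4 * β)) := exp_pow_id 4
  have e : ∑ k ∈ ({-2,-1,1,2} : Finset ℤ), (k:ℝ) ^ (2*2) * Real.exp (-β * (k:ℝ) ^ 2)
      = 2 * Real.exp (-β) + 32 * Real.exp (-β) ^ 4 := by
    norm_num [Finset.sum_insert, Finset.mem_insert, Finset.mem_singleton]
    rw [e4]
    ring_nf
  rw [e] at h
  exact h

set_option maxHeartbeats 2000000 in
lemma large_case {β : ℝ} (hβ2 : 1/2 ≤ β) :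
    0 < 3 * β * (thS 2 β * thS 0 β - (thS 1 β) ^ 2) - thS 1 β * thS 0 β := by
  have hβ : 0 < β := by linarith
  set q := Real.exp (-β) with hqdef
  have hq0 : 0 < q := Real.exp_pos _
  have hqh : q ≤ 0.60655 := by
    have h1 : Real.exp (-β) ≤ Real.exp (-(1/2:ℝ)) := Real.exp_le_exp.2 (by linarith)
    exact le_trans h1 exp_neg_half_le
  have hq1 : q < 1 := by nlinarith
  have hq2 : q^2 ≤ 0.368 := by nlinarith [pow_le_pow_left₀ hq0.le hqh 2]
  have hq3 : q^3 ≤ 0.22316 := by nlinarith [pow_le_pow_left₀ hq0.le hqh 3]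
  have hq3' : 2 * q^3 < 1 := by nlinarith
  have hq5 : q^5 ≤ 0.08211 := by nlinarith [pow_le_pow_left₀ hq0.le hqh 5]
  -- upper bounds
  have hinv2 : (1 - q^2)⁻¹ ≤ 1.585 := by
    have h1 : (0:ℝ) < 1/1.585 := by norm_num
    have h2 : (1:ℝ)/1.585 ≤ 1 - q^2 := by norm_num; nlinarith
    have := inv_anti₀ h1 h2
    norm_num at this ⊢
    linarith
  have hinv3 : (1 - 2*q^3)⁻¹ ≤ 1.807 := by
    have h1 : (0:ℝ) < 1/1.807 := by norm_num
    have h2 : (1:ℝ)/1.807 ≤ 1 - 2*q^3 := by nlinarith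
    have := inv_anti₀ h1 h2
    norm_num at this ⊢
    linarith
  have hq4nn : (0:ℝ) ≤ q^4 := by positivity
  have hq9nn : (0:ℝ) ≤ q^9 := by positivity
  have hS0u : thS 0 β ≤ 1 + 2*q + 3.17*q^4 := by
    have h := S0_upper hβ hq1
    have h2 : q^4 * (1-q^2)⁻¹ ≤ 1.585 * q^4 := by
      have := mul_le_mul_of_nonneg_left hinv2 hq4nn
      linarith [this]
    nlinarith [h, h2]
  have hS1u : thS 1 β ≤ 2*q + 10.68*q^4 := by
    have h := S1_upper hβ hq3'
    have h9 : q^9 ≤ 0.08211 * q^4 := by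
      have : q^9 = q^5 * q^4 := by ring
      rw [this]
      exact mul_le_mul_of_nonneg_right hq5 hq4nn
    have h2 : q^9 * (1-2*q^3)⁻¹ ≤ 1.807 * q^9 := by
      have := mul_le_mul_of_nonneg_left hinv3 hq9nn
      linarith [this]
    nlinarith [h, h2, h9]
  have hS0l : 1 + 2*q ≤ thS 0 β := S0_lower hβ
  have hS2l : 2*q + 32*q^4 ≤ thS 2 β := S2_lower hβ
  have hS1nn : 0 ≤ thS 1 β := thS_nonneg 1 β
  have hS0nn : 0 ≤ thS 0 β := thS_nonneg 0 β
  have hpoly := poly_large hq0 hqh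
  have hC0pos : (0:ℝ) < (2*q+10.68*q^4)*(1+2*q+3.17*q^4) := by positivity
  have hB0pos : (0:ℝ) < (2*q+32*q^4)*(1+2*q) - (2*q+10.68*q^4)^2 := by nlinarith [hpoly, hC0pos]
  have hprodA : (2*q+32*q^4)*(1+2*q) ≤ thS 2 β * thS 0 β :=
    mul_le_mul hS2l hS0l (by positivity) (le_trans (by positivity) hS2l)
  have hprodB : (thS 1 β)^2 ≤ (2*q+10.68*q^4)^2 := pow_le_pow_left₀ hS1nn hS1u 2
  have hprodC : thS 1 β * thS 0 β ≤ (2*q+10.68*q^4)*(1+2*q+3.17*q^4) :=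
    mul_le_mul hS1u hS0u hS0nn (by positivity)
  have hdiff : (2*q+32*q^4)*(1+2*q) - (2*q+10.68*q^4)^2
      ≤ thS 2 β * thS 0 β - (thS 1 β)^2 := by linarith
  have hmul : (3/2) * ((2*q+32*q^4)*(1+2*q) - (2*q+10.68*q^4)^2)
      ≤ 3 * β * (thS 2 β * thS 0 β - (thS 1 β)^2) :=
    mul_le_mul (by linarith) hdiff hB0pos.le (by linarith)
  linarith [hpoly, hmul, hprodC]

theorem stmt15 (β : ℝ) (hβ : 0 < β) :
    0 < ∑' v : ℤ × ℤ,
      ((3 * β * ((v.2:ℝ)^4 - (v.2:ℝ)^2 * (v.1:ℝ)^2) - (v.2:ℝ)^2) *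
        Real.exp (-β * ((v.1:ℝ)^2 + (v.2:ℝ)^2))) := by
  classical
  set a : ℤ → ℝ := fun k => Real.exp (-β * (k:ℝ)^2) with hadef
  set b : ℤ → ℝ := fun k => (k:ℝ)^2 * Real.exp (-β * (k:ℝ)^2) with hbdef
  set c : ℤ → ℝ := fun k => (k:ℝ)^4 * Real.exp (-β * (k:ℝ)^2) with hcdef
  have ha : Summable a := (summable_thS 0 hβ).congr (fun k => by simp [hadef])
  have hb : Summable b := (summable_thS 1 hβ).congr (fun k => by simp [hbdef])
  have hc : Summable c := (summable_thS 2 hβ).congr (fun k => by simp [hcdef])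
  have hann : ∀ k, 0 ≤ a k := fun k => (Real.exp_pos _).le
  have hbnn : ∀ k, 0 ≤ b k := fun k => by positivity
  have hcnn : ∀ k, 0 ≤ c k := fun k => by positivity
  have han : Summable (fun k => ‖a k‖) := ha.congr (fun k => (Real.norm_of_nonneg (hann k)).symm)
  have hbn : Summable (fun k => ‖b k‖) := hb.congr (fun k => (Real.norm_of_nonneg (hbnn k)).symm)
  have hcn : Summable (fun k => ‖c k‖) := hc.congr (fun k => (Real.norm_of_nonneg (hcnn k)).symm)
  have hsum_ac : Summable (fun v : ℤ × ℤ => a v.1 * c v.2) := summable_mul_of_summable_norm han hcn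
  have hsum_bb : Summable (fun v : ℤ × ℤ => b v.1 * b v.2) := summable_mul_of_summable_norm hbn hbn
  have hsum_ab : Summable (fun v : ℤ × ℤ => a v.1 * b v.2) := summable_mul_of_summable_norm han hbn
  have e_ac : (∑' k, a k) * (∑' k, c k) = ∑' v : ℤ × ℤ, a v.1 * c v.2 :=
    tsum_mul_tsum_of_summable_norm han hcn
  have e_bb : (∑' k, b k) * (∑' k, b k) = ∑' v : ℤ × ℤ, b v.1 * b v.2 :=
    tsum_mul_tsum_of_summable_norm hbn hbn
  have e_ab : (∑' k, a k) * (∑' k, b k) = ∑' v : ℤ × ℤ, a v.1 * b v.2 :=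
    tsum_mul_tsum_of_summable_norm han hbn
  have hpt : ∀ v : ℤ × ℤ,
      ((3 * β * ((v.2:ℝ)^4 - (v.2:ℝ)^2 * (v.1:ℝ)^2) - (v.2:ℝ)^2) *
        Real.exp (-β * ((v.1:ℝ)^2 + (v.2:ℝ)^2)))
      = 3 * β * (a v.1 * c v.2) - 3 * β * (b v.1 * b v.2) - a v.1 * b v.2 := by
    intro v
    have he : Real.exp (-β * ((v.1:ℝ)^2 + (v.2:ℝ)^2))
        = Real.exp (-β * (v.1:ℝ)^2) * Real.exp (-β * (v.2:ℝ)^2) := by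
      rw [← Real.exp_add]; congr 1; ring
    simp only [hadef, hbdef, hcdef]
    rw [he]; ring
  have hsplit : ∑' v : ℤ × ℤ,
      ((3 * β * ((v.2:ℝ)^4 - (v.2:ℝ)^2 * (v.1:ℝ)^2) - (v.2:ℝ)^2) *
        Real.exp (-β * ((v.1:ℝ)^2 + (v.2:ℝ)^2)))
      = 3 * β * ((∑' k, a k) * (∑' k, c k)) - 3 * β * ((∑' k, b k) * (∑' k, b k))
        - (∑' k, a k) * (∑' k, b k) := by
    rw [tsum_congr hpt]
    rw [Summable.tsum_sub (Summable.sub (hsum_ac.mul_left (3*β)) (hsum_bb.mul_left (3*β))) hsum_ab,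
      Summable.tsum_sub (hsum_ac.mul_left (3*β)) (hsum_bb.mul_left (3*β)),
      tsum_mul_left, tsum_mul_left]
    rw [e_ac, e_bb, e_ab]
  rw [hsplit]
  have eS0 : (∑' k, a k) = thS 0 β := (thS0_eq β).symm
  have eS1 : (∑' k, b k) = thS 1 β := (tsum_congr (fun k => by simp [hbdef])).symm
  have eS2 : (∑' k, c k) = thS 2 β := (tsum_congr (fun k => by simp [hcdef])).symm
  rw [eS0, eS1, eS2]
  have main : 0 < 3 * β * (thS 2 β * thS 0 β - (thS 1 β) ^ 2) - thS 1 β * thS 0 β := by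
    rcases le_or_gt β (1/2) with h | h
    · exact small_case hβ h
    · exact large_case h.le
  nlinarith [main]
end

section
/- For every β > 0, define A₁ = ∑ R² e^{−βR}, A₂ = ∑ R e^{−βR}, A₃ = ∑ T e^{−βR}, where the sums run over (m,n,p) ∈ ℤ³ \ {0}, R = m²+n²+p²+mp+np, and T = mn(m+p)(n+p). Then A₁ > 4·A₃. -/
open Real

private noncomputable def Qf (v : ℤ × ℤ × ℤ) : ℝ :=
  (v.1:ℝ)^2 + (v.2.1:ℝ)^2 + (v.2.2:ℝ)^2 + v.1 * v.2.2 + v.2.1 * v.2.2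

private noncomputable def Tf (v : ℤ × ℤ × ℤ) : ℝ :=
  (v.1:ℝ) * v.2.1 * ((v.1:ℝ) + v.2.2) * ((v.2.1:ℝ) + v.2.2)

private lemma aux_sq_le_exp {x : ℝ} (hx : 0 ≤ x) : x ^ 2 ≤ 4 * Real.exp x := by
  have h1 : x / 2 + 1 ≤ Real.exp (x / 2) := Real.add_one_le_exp (x / 2)
  have h2 : Real.exp x = Real.exp (x / 2) * Real.exp (x / 2) := by
    rw [← Real.exp_add]; ring_nf
  nlinarith [Real.exp_pos (x / 2)]

private lemma aux_summable_int (c : ℝ) (hc : 0 < c) :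
    Summable (fun k : ℤ => Real.exp (-c * (k : ℝ) ^ 2)) := by
  have key : ∀ k : ℤ, Real.exp (-c * (k : ℝ) ^ 2) ≤ Real.exp (-c) ^ k.natAbs := by
    intro k
    rw [← Real.exp_nat_mul]
    apply Real.exp_le_exp.2
    have h3 : ((k.natAbs : ℝ)) ^ 2 = (k : ℝ) ^ 2 := by
      rw [Nat.cast_natAbs, Int.cast_abs, sq_abs]
    have h2 : (k.natAbs : ℝ) ≤ ((k.natAbs : ℝ)) ^ 2 := by
      exact_mod_cast Nat.le_self_pow two_ne_zero k.natAbs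
    rw [h3] at h2
    nlinarith [mul_le_mul_of_nonneg_left h2 hc.le]
  apply Summable.of_nonneg_of_le (fun k => (Real.exp_pos _).le) key
  have hgeo : Summable (fun n : ℕ => Real.exp (-c) ^ n) :=
    summable_geometric_of_lt_one (Real.exp_pos _).le
      (Real.exp_lt_one_iff.2 (by linarith))
  apply Summable.of_nat_of_neg <;> simpa using hgeo

private lemma Qf_nonneg (v : ℤ × ℤ × ℤ) : 0 ≤ Qf v := by
  unfold Qf
  nlinarith [sq_nonneg ((v.1:ℝ) + v.2.2), sq_nonneg ((v.2.1:ℝ) + v.2.2),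
    sq_nonneg (v.1:ℝ), sq_nonneg (v.2.1:ℝ)]

private lemma Qf_big (v : ℤ × ℤ × ℤ) :
    (v.1:ℝ)^2 + (v.2.1:ℝ)^2 + (v.2.2:ℝ)^2 ≤ 4 * Qf v := by
  unfold Qf
  nlinarith [sq_nonneg (3*(v.1:ℝ) + 2*(v.2.2:ℝ)), sq_nonneg (3*(v.2.1:ℝ) + 2*(v.2.2:ℝ)),
    sq_nonneg (v.2.2:ℝ)]

private lemma Tf_abs (v : ℤ × ℤ × ℤ) : 4 * |Tf v| ≤ (Qf v) ^ 2 := by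
  obtain ⟨m', n', p'⟩ := v
  set m := (m' : ℝ); set n := (n' : ℝ); set p := (p' : ℝ)
  rcases abs_cases (Tf (m', n', p')) with ⟨h, _⟩ | ⟨h, _⟩ <;> rw [h] <;>
    simp only [Tf, Qf]
  · nlinarith [sq_nonneg (m*(m+p) - n*(n+p)), sq_nonneg (p*(2*m+p)), sq_nonneg (p*(2*n+p))]
  · nlinarith [sq_nonneg (m*(m+p) + n*(n+p)),
      mul_nonneg (by positivity : (0:ℝ) ≤ m^2 + (m+p)^2) (by positivity : (0:ℝ) ≤ n^2 + (n+p)^2)]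

private lemma summable_main (β : ℝ) (hβ : 0 < β) :
    Summable (fun v : ℤ × ℤ × ℤ => (Qf v)^2 * Real.exp (-β * Qf v)) := by
  have hG : Summable (fun v : ℤ × ℤ × ℤ =>
      (16 / β^2) * (Real.exp (-(β/8) * (v.1:ℝ)^2) *
        (Real.exp (-(β/8) * (v.2.1:ℝ)^2) * Real.exp (-(β/8) * (v.2.2:ℝ)^2)))) := by
    have h1 := aux_summable_int (β/8) (by positivity)
    have h2 : Summable (fun w : ℤ × ℤ =>
        Real.exp (-(β/8) * (w.1:ℝ)^2) * Real.exp (-(β/8) * (w.2:ℝ)^2)) :=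
      h1.mul_of_nonneg h1 (fun k => (Real.exp_pos _).le) (fun k => (Real.exp_pos _).le)
    exact (h1.mul_of_nonneg h2 (fun k => (Real.exp_pos _).le)
      (fun w => by positivity)).mul_left _
  refine Summable.of_nonneg_of_le (fun v => by positivity) (fun v => ?_) hG
  have hq := Qf_nonneg v
  have h1 : (β/2 * Qf v)^2 ≤ 4 * Real.exp (β/2 * Qf v) := aux_sq_le_exp (by positivity)
  have h2 : (Qf v)^2 ≤ (16 / β^2) * Real.exp (β/2 * Qf v) := by
    have hb2 : 0 < β^2 := by positivity
    rw [div_mul_eq_mul_div, le_div_iff₀ hb2]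
    nlinarith
  have h3 : (Qf v)^2 * Real.exp (-β * Qf v) ≤ (16/β^2) * Real.exp (-(β/2) * Qf v) := by
    have h5 := mul_le_mul_of_nonneg_right h2 (Real.exp_pos (-β * Qf v)).le
    calc (Qf v)^2 * Real.exp (-β * Qf v)
        ≤ (16/β^2) * Real.exp (β/2 * Qf v) * Real.exp (-β * Qf v) := h5
      _ = (16/β^2) * Real.exp (-(β/2) * Qf v) := by
          rw [mul_assoc, ← Real.exp_add]; ring_nf
  refine h3.trans ?_
  rw [← Real.exp_add, ← Real.exp_add]
  have h4 : -(β/8) * (v.1:ℝ)^2 + (-(β/8) * (v.2.1:ℝ)^2 + -(β/8) * (v.2.2:ℝ)^2)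
      = -(β/8) * ((v.1:ℝ)^2 + (v.2.1:ℝ)^2 + (v.2.2:ℝ)^2) := by ring
  rw [h4]
  apply mul_le_mul_of_nonneg_left _ (by positivity : (0:ℝ) ≤ 16/β^2)
  apply Real.exp_le_exp.2
  have h6 := Qf_big v
  nlinarith

theorem stmt16 (β : ℝ) (hβ : 0 < β) :
    (∑' v : {v : ℤ × ℤ × ℤ // v ≠ 0},
      (((v.1.1:ℝ)^2 + (v.1.2.1:ℝ)^2 + (v.1.2.2:ℝ)^2
          + v.1.1 * v.1.2.2 + v.1.2.1 * v.1.2.2)^2 *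
        Real.exp (-β * ((v.1.1:ℝ)^2 + (v.1.2.1:ℝ)^2 + (v.1.2.2:ℝ)^2
          + v.1.1 * v.1.2.2 + v.1.2.1 * v.1.2.2))))
    > 4 * ∑' v : {v : ℤ × ℤ × ℤ // v ≠ 0},
      ((v.1.1:ℝ) * v.1.2.1 * ((v.1.1:ℝ) + v.1.2.2) * ((v.1.2.1:ℝ) + v.1.2.2) *
        Real.exp (-β * ((v.1.1:ℝ)^2 + (v.1.2.1:ℝ)^2 + (v.1.2.2:ℝ)^2
          + v.1.1 * v.1.2.2 + v.1.2.1 * v.1.2.2))) := by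
  have hFs : Summable (fun v : {v : ℤ × ℤ × ℤ // v ≠ 0} =>
      (Qf v.1)^2 * Real.exp (-β * Qf v.1)) := (summable_main β hβ).subtype _
  have hTs : Summable (fun v : {v : ℤ × ℤ × ℤ // v ≠ 0} =>
      4 * (Tf v.1 * Real.exp (-β * Qf v.1))) := by
    apply Summable.mul_left
    apply Summable.of_abs
    refine Summable.of_nonneg_of_le (fun v => abs_nonneg _) (fun v => ?_) hFs
    rw [abs_mul, Real.abs_exp]
    have h := Tf_abs v.1
    have he := (Real.exp_pos (-β * Qf v.1)).le
    nlinarith [abs_nonneg (Tf v.1), sq_nonneg (Qf v.1)]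
  have key : (∑' v : {v : ℤ × ℤ × ℤ // v ≠ 0}, 4 * (Tf v.1 * Real.exp (-β * Qf v.1)))
      < ∑' v : {v : ℤ × ℤ × ℤ // v ≠ 0}, (Qf v.1)^2 * Real.exp (-β * Qf v.1) := by
    refine Summable.tsum_lt_tsum (i := ⟨(1, 0, 0), by simp⟩) ?_ ?_ hTs hFs
    · intro v
      show 4 * (Tf v.1 * Real.exp (-β * Qf v.1)) ≤ (Qf v.1)^2 * Real.exp (-β * Qf v.1)
      have h := Tf_abs v.1
      have he := (Real.exp_pos (-β * Qf v.1)).le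
      have h2 : 4 * Tf v.1 ≤ (Qf v.1)^2 := le_trans (by nlinarith [le_abs_self (Tf v.1)]) h
      nlinarith
    · have hq : Qf ((1, 0, 0) : ℤ × ℤ × ℤ) = 1 := by norm_num [Qf]
      have ht : Tf ((1, 0, 0) : ℤ × ℤ × ℤ) = 0 := by norm_num [Tf]
      simp only [hq, ht]
      simpa using Real.exp_pos (-β * 1)
  have hconv : (4 : ℝ) * ∑' v : {v : ℤ × ℤ × ℤ // v ≠ 0},
        (Tf v.1 * Real.exp (-β * Qf v.1))
      = ∑' v : {v : ℤ × ℤ × ℤ // v ≠ 0}, 4 * (Tf v.1 * Real.exp (-β * Qf v.1)) :=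
    (tsum_mul_left).symm
  show (∑' v : {v : ℤ × ℤ × ℤ // v ≠ 0}, (Qf v.1)^2 * Real.exp (-β * Qf v.1))
      > 4 * ∑' v : {v : ℤ × ℤ × ℤ // v ≠ 0}, (Tf v.1 * Real.exp (-β * Qf v.1))
  rw [hconv]
  exact key
end

section
/- For every β > 0, the quantity D(β) := (∑_{p∈ℤ} p² e^{−βp²})² · ∑_{n∈ℤ}(2βn² − 1)e^{−βn²} is strictly negative. -/
open Real

noncomputable def Lfun (b : ℝ) : ℝ := ∑' n : ℤ, Real.exp (-b * (n:ℝ)^2)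
noncomputable def Sfun (b : ℝ) : ℝ := ∑' n : ℤ, (n:ℝ)^2 * Real.exp (-b * (n:ℝ)^2)

lemma aux_nat (b : ℝ) (hb : 0 < b) (k : ℕ) :
    Summable (fun n : ℕ => (n:ℝ)^k * Real.exp (-b * (n:ℝ)^2)) := by
  have h1 : Summable (fun n : ℕ => (n:ℝ)^k * Real.exp (-b * n)) := by
    simpa [mul_comm] using summable_pow_mul_exp_neg_nat_mul k hb
  refine h1.of_nonneg_of_le (fun n => by positivity) (fun n => ?_)
  refine mul_le_mul_of_nonneg_left (Real.exp_le_exp.2 ?_) (by positivity)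
  have h2 : (n:ℝ) ≤ (n:ℝ)^2 := by exact_mod_cast Nat.le_self_pow two_ne_zero n
  nlinarith

lemma sumexp (b : ℝ) (hb : 0 < b) : Summable (fun n : ℤ => Real.exp (-b * (n:ℝ)^2)) := by
  apply Summable.of_nat_of_neg <;> simpa using aux_nat b hb 0

lemma sumsqexp (b : ℝ) (hb : 0 < b) :
    Summable (fun n : ℤ => (n:ℝ)^2 * Real.exp (-b * (n:ℝ)^2)) := by
  apply Summable.of_nat_of_neg <;> simpa using aux_nat b hb 2

lemma Spos (b : ℝ) (hb : 0 < b) : 0 < Sfun b := by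
  refine Summable.tsum_pos (sumsqexp b hb) (fun n => by positivity) 1 (by norm_num; positivity)

lemma Lpos (b : ℝ) (hb : 0 < b) : 0 < Lfun b := by
  refine Summable.tsum_pos (sumexp b hb) (fun n => (Real.exp_pos _).le) 0 (Real.exp_pos _)

lemma hasDerivAt_L (b : ℝ) (hb : 0 < b) : HasDerivAt Lfun (-Sfun b) b := by
  have key : HasDerivAt (fun z => ∑' n : ℤ, Real.exp (-z * (n:ℝ)^2))
      (∑' n : ℤ, -((n:ℝ)^2 * Real.exp (-b * (n:ℝ)^2))) b := by
    refine hasDerivAt_tsum_of_isPreconnected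
      (u := fun n : ℤ => (n:ℝ)^2 * Real.exp (-(b/2) * (n:ℝ)^2))
      (g' := fun n y => -((n:ℝ)^2 * Real.exp (-y * (n:ℝ)^2)))
      (sumsqexp _ (by linarith)) (isOpen_Ioi (a := b/2)) (isPreconnected_Ioi)
      (fun n y hy => ?_) (fun n y hy => ?_) (by simp [Set.mem_Ioi]; linarith)
      (sumexp b hb) (by simp [Set.mem_Ioi]; linarith)
    · have h := ((hasDerivAt_id y).neg.mul_const ((n:ℝ)^2)).exp
      simpa [mul_comm, mul_assoc, mul_left_comm] using h
    · simp only [norm_neg, norm_mul, Real.norm_eq_abs, abs_of_nonneg (sq_nonneg (n:ℝ)),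
        Real.abs_exp]
      refine mul_le_mul_of_nonneg_left (Real.exp_le_exp.2 ?_) (sq_nonneg _)
      have : b/2 ≤ y := le_of_lt hy
      nlinarith [sq_nonneg (n:ℝ)]
  rw [show Lfun = fun z => ∑' n : ℤ, Real.exp (-z * (n:ℝ)^2) from rfl]
  convert key using 1
  rw [Sfun, ← tsum_neg]

lemma jacobi (b : ℝ) (hb : 0 < b) :
    Lfun b = (Real.sqrt (b/π))⁻¹ * Lfun (π^2/b) := by
  have hπ := Real.pi_pos
  have ha : 0 < b/π := by positivity
  have key := Real.tsum_exp_neg_mul_int_sq ha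
  rw [← Real.sqrt_eq_rpow] at key
  rw [Lfun, Lfun, show (Real.sqrt (b/π))⁻¹ = 1 / Real.sqrt (b/π) by rw [one_div]]
  rw [show (fun n : ℤ => Real.exp (-b * (n:ℝ)^2))
        = fun n : ℤ => Real.exp (-π * (b/π) * (n:ℝ)^2) from funext fun n => by
      congr 1; field_simp]
  rw [show (fun n : ℤ => Real.exp (-(π^2/b) * (n:ℝ)^2))
        = fun n : ℤ => Real.exp (-π / (b/π) * (n:ℝ)^2) from funext fun n => by
      congr 1; rw [div_div_eq_mul_div]; ring]
  exact key

lemma main_neg (β : ℝ) (hβ : 0 < β) : 2 * β * Sfun β - Lfun β < 0 := by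
  have hπ := Real.pi_pos
  have ha : 0 < β / π := by positivity
  have hc : 0 < Real.sqrt (β/π) := Real.sqrt_pos.2 ha
  set c := Real.sqrt (β/π) with hcdef
  have hc2 : c^2 = β/π := Real.sq_sqrt ha.le
  set M := Lfun (π^2/β) with hM
  set N := Sfun (π^2/β) with hN
  have hNpos : 0 < N := Spos _ (by positivity)
  have hMpos : 0 < M := Lpos _ (by positivity)
  -- derivative of the RHS of the Jacobi identity
  have h1 : HasDerivAt (fun b : ℝ => b / π) (1/π) β := by
    simpa using (hasDerivAt_id β).div_const π
  have h2 : HasDerivAt (fun b : ℝ => Real.sqrt (b/π)) (1/(2*c) * (1/π)) β := by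
    exact (Real.hasDerivAt_sqrt (ne_of_gt ha)).comp β h1
  have h3 : HasDerivAt (fun b : ℝ => (Real.sqrt (b/π))⁻¹)
      (-(1/(2*c) * (1/π)) / c^2) β := h2.inv (ne_of_gt hc)
  have h4 : HasDerivAt (fun b : ℝ => π^2 / b) (-(π^2)/β^2) β := by
    have := (hasDerivAt_inv (ne_of_gt hβ)).const_mul (π^2)
    simpa [div_eq_mul_inv, mul_comm, neg_div] using this
  have h5 : HasDerivAt (fun b : ℝ => Lfun (π^2/b)) (-N * (-(π^2)/β^2)) β :=
    (hasDerivAt_L _ (by positivity)).comp β h4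
  have h6 : HasDerivAt (fun b : ℝ => (Real.sqrt (b/π))⁻¹ * Lfun (π^2/b))
      ((-(1/(2*c) * (1/π)) / c^2) * M + c⁻¹ * (-N * (-(π^2)/β^2))) β := h3.mul h5
  -- Lfun agrees with the RHS near β
  have heq : Lfun =ᶠ[nhds β] fun b : ℝ => (Real.sqrt (b/π))⁻¹ * Lfun (π^2/b) := by
    filter_upwards [Ioi_mem_nhds hβ] with b hb
    exact jacobi b hb
  have h7 : HasDerivAt Lfun
      ((-(1/(2*c) * (1/π)) / c^2) * M + c⁻¹ * (-N * (-(π^2)/β^2))) β :=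
    h6.congr_of_eventuallyEq heq
  have huniq : -Sfun β = (-(1/(2*c) * (1/π)) / c^2) * M + c⁻¹ * (-N * (-(π^2)/β^2)) :=
    (hasDerivAt_L β hβ).unique h7
  have hLβ : Lfun β = c⁻¹ * M := jacobi β hβ
  have hβπ : β = π * c^2 := by rw [hc2]; field_simp
  rw [hLβ]
  have hS : Sfun β = 1/(2*c^3*π) * M - c⁻¹ * N * π^2/β^2 := by
    field_simp at huniq ⊢
    nlinarith [huniq, sq_nonneg c, hc.le]
  rw [hS]
  rw [hβπ]
  have key : 2 * (π * c^2) * (1/(2*c^3*π) * M - c⁻¹ * N * π^2/(π*c^2)^2) - c⁻¹ * M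
      = -(2 * N * π /c^3) := by
    field_simp
    ring
  rw [key]
  have : 0 < 2 * N * π / c^3 := by positivity
  linarith

theorem stmt19 (β : ℝ) (hβ : 0 < β) :
    (∑' p : ℤ, (p:ℝ)^2 * Real.exp (-β * (p:ℝ)^2))^2 *
      ∑' n : ℤ, (2 * β * (n:ℝ)^2 - 1) * Real.exp (-β * (n:ℝ)^2) < 0 := by
  have hsum : (∑' n : ℤ, (2 * β * (n:ℝ)^2 - 1) * Real.exp (-β * (n:ℝ)^2))
      = 2 * β * Sfun β - Lfun β := by
    rw [show (fun n : ℤ => (2 * β * (n:ℝ)^2 - 1) * Real.exp (-β * (n:ℝ)^2))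
        = fun n : ℤ => 2 * β * ((n:ℝ)^2 * Real.exp (-β * (n:ℝ)^2))
            - Real.exp (-β * (n:ℝ)^2) from funext fun n => by ring]
    rw [Summable.tsum_sub (((sumsqexp β hβ).mul_left (2*β))) (sumexp β hβ), tsum_mul_left]
    rfl
  rw [hsum]
  exact mul_neg_of_pos_of_neg (pow_pos (Spos β hβ) 2) (main_neg β hβ)
end
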